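/- arXiv:1106.1040 — 7 statements merged into one kernel-verified Lean document; each statement's English description precedes it below -/
import Mathlib

section
/- Let G be a topological group acting continuously on a nonempty compact convex subset K of a Hausdorff locally convex real topological vector space, in such a way that for every g ∈ G the map x ↦ g • x is affine (g • (t·x + (1−t)·y) = t·(g • x) + (1−t)·(g • y) for all x, y ∈ K and t ∈ [0,1]). Then the action has a fixed point if and only if K carries a Borel probability measure invariant under the action. -/
/-!
A Dirac mass at a fixed point is invariant. Conversely, an invariant probability measure `μ`
has a barycenter `b ∈ K`, a point at which every continuous affine function on `K` takes its
`μ`-mean value: for finitely many such functions `φ₁, …, φₙ` the mean of `(φ₁, …, φₙ)` lies,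
by Jensen, in the compact convex image of `K` in `ℝⁿ`, and compactness of `K` handles all of
them at once.
For a continuous linear functional `f` and `g ∈ G`, the function `f ∘ (g • ·)` is continuous
and affine, so invariance gives `f (g • b) = ∫ f (g • x) dμ = ∫ f dμ = f b`; continuous linear
functionals separate points of `E`, hence `g • b = b`.
-/

open MeasureTheory Function

theorem exists_forall_eq_integral_of_convex_range {X ι : Type*} [TopologicalSpace X]
    [CompactSpace X] [MeasurableSpace X] [OpensMeasurableSpace X] (μ : Measure X)
    [IsProbabilityMeasure μ] (φ : ι → X → ℝ) (hφ : ∀ i, Continuous (φ i))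
    (hconv : ∀ u : Finset ι, Convex ℝ (Set.range fun x (i : u) => φ i x)) :
    ∃ b, ∀ i, φ i b = ∫ x, φ i x ∂μ := by
  have hint : ∀ i, Integrable (φ i) μ := fun i =>
    (hφ i).integrable_of_hasCompactSupport (.of_compactSpace _)
  have hfin : ∀ u : Finset ι,
      (Set.univ ∩ ⋂ i ∈ u, {x | φ i x = ∫ x, φ i x ∂μ}).Nonempty := by
    intro u
    have hT : Continuous fun x (i : u) => φ i x := continuous_pi fun i => hφ i
    obtain ⟨b, hb⟩ := (hconv u).integral_mem (isCompact_range hT).isClosed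
      (.of_forall Set.mem_range_self) (Integrable.of_eval fun i => hint i)
    refine ⟨b, trivial, Set.mem_iInter₂.2 fun i hi => ?_⟩
    have hbi := congrFun hb ⟨i, hi⟩
    rwa [eval_integral (ι := u) (fun i => hint i)] at hbi
  obtain ⟨b, -, hb⟩ := isCompact_univ.inter_iInter_nonempty _
    (fun i => isClosed_eq (hφ i) continuous_const) hfin
  exact ⟨b, Set.mem_iInter.1 hb⟩

section AffineOn

variable {E F : Type*} [AddCommGroup E] [Module ℝ E] [AddCommGroup F] [Module ℝ F]
  {K : Set E} (hK : Convex ℝ K)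

def AffineOn (φ : K → F) : Prop :=
  ∀ (x y : K) (t : ℝ) (ht0 : 0 ≤ t) (ht1 : t ≤ 1),
    φ ⟨t • (x : E) + (1 - t) • (y : E), hK x.2 y.2 ht0 (by linarith) (by ring)⟩
      = t • φ x + (1 - t) • φ y

theorem affineOn_val : AffineOn hK fun x : K => (x : E) := fun _ _ _ _ _ => rfl

variable {hK}

theorem AffineOn.comp_linearMap {F' : Type*} [AddCommGroup F'] [Module ℝ F'] {φ : K → F}
    (hφ : AffineOn hK φ) (f : F →ₗ[ℝ] F') : AffineOn hK fun x => f (φ x) := by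
  intro x y t ht0 ht1
  simp only [hφ x y t ht0 ht1, map_add, map_smul]

theorem AffineOn.pi {ι : Type*} {φ : ι → K → ℝ} (hφ : ∀ i, AffineOn hK (φ i)) :
    AffineOn hK fun x i => φ i x := fun x y t ht0 ht1 =>
  funext fun i => hφ i x y t ht0 ht1

theorem AffineOn.convex_range {φ : K → F} (hφ : AffineOn hK φ) : Convex ℝ (Set.range φ) := by
  rintro _ ⟨x, rfl⟩ _ ⟨y, rfl⟩ s r hs hr hsr
  obtain rfl : r = 1 - s := by linarith
  exact ⟨_, hφ x y s hs (by linarith)⟩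

end AffineOn

section Barycenter

variable {E : Type*} [AddCommGroup E] [Module ℝ E] [TopologicalSpace E] {K : Set E}
  (hK : Convex ℝ K) [MeasurableSpace K] (μ : Measure K)

def IsBarycenter (b : K) : Prop :=
  ∀ φ : K → ℝ, Continuous φ → AffineOn hK φ → φ b = ∫ x, φ x ∂μ

theorem Convex.exists_isBarycenter [CompactSpace K] [OpensMeasurableSpace K]
    [IsProbabilityMeasure μ] : ∃ b, IsBarycenter hK μ b := by
  obtain ⟨b, hb⟩ := exists_forall_eq_integral_of_convex_range μ
    (fun φ : {φ : K → ℝ // Continuous φ ∧ AffineOn hK φ} => φ.1) (fun φ => φ.2.1)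
    (fun _ => (AffineOn.pi fun φ => φ.1.2.2).convex_range)
  exact ⟨b, fun φ hφc hφa => hb ⟨φ, hφc, hφa⟩⟩

variable {hK μ}

theorem IsBarycenter.isFixedPt [IsTopologicalAddGroup E] [ContinuousSMul ℝ E] [T1Space E]
    [LocallyConvexSpace ℝ E] [OpensMeasurableSpace K] {b : K} (hb : IsBarycenter hK μ b) {T : K → K}
    (hTc : Continuous T) (hTa : AffineOn hK fun x => (T x : E))
    (hTμ : MeasurePreserving T μ μ) : IsFixedPt T b := by
  refine Subtype.ext <| (SeparatingDual.eq_iff_forall_dual_eq (R := ℝ)).2 fun f => ?_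
  have hf : Continuous fun x : K => f x := f.continuous.comp continuous_subtype_val
  calc f (T b) = ∫ x, f (T x) ∂μ := hb _ (hf.comp hTc) (hTa.comp_linearMap f.toLinearMap)
    _ = ∫ x, f x ∂μ := by
      rw [← integral_map hTμ.aemeasurable hf.aestronglyMeasurable, hTμ.map_eq]
    _ = f b := (hb _ hf ((affineOn_val hK).comp_linearMap f.toLinearMap)).symm

end Barycenter

/-- Let `G` be a topological group acting continuously on a nonempty compact
convex subset `K` of a Hausdorff locally convex real topological vector space, with each `g`
acting affinely.  Then the action has a fixed point iff `K` carries an invariant Borel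
probability measure. -/
theorem stmt_0 (G : Type) [TopologicalSpace G]
    (E : Type) [AddCommGroup E] [Module ℝ E] [TopologicalSpace E]
    [IsTopologicalAddGroup E] [ContinuousSMul ℝ E] [T2Space E] [LocallyConvexSpace ℝ E]
    (K : Set E) (hKcomp : IsCompact K) (hKconv : Convex ℝ K)
    [MeasurableSpace K] [BorelSpace K]
    (act : G → K → K)
    (hcont : Continuous fun p : G × K => act p.1 p.2)
    (haff : ∀ (g : G) (x y : K) (t : ℝ) (ht0 : 0 ≤ t) (ht1 : t ≤ 1),
      (act g ⟨t • (x : E) + (1 - t) • (y : E),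
          hKconv x.2 y.2 ht0 (by linarith) (by ring)⟩ : E)
        = t • (act g x : E) + (1 - t) • (act g y : E)) :
    (∃ x : K, ∀ g : G, act g x = x) ↔
      (∃ μ : Measure K, IsProbabilityMeasure μ ∧
        ∀ (g : G) (B : Set K), MeasurableSet B → μ (act g ⁻¹' B) = μ B) := by
  have : CompactSpace K := isCompact_iff_compactSpace.mp hKcomp
  have hact : ∀ g, Continuous (act g) := fun g => hcont.comp (.prodMk_right g)
  constructor
  · rintro ⟨x, hx⟩
    refine ⟨.dirac x, inferInstance, fun g B hB => ?_⟩
    rw [← Measure.map_apply (hact g).measurable hB, Measure.map_dirac' (hact g).measurable, hx g]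
  · rintro ⟨μ, hμ, hinv⟩
    obtain ⟨b, hb⟩ := hKconv.exists_isBarycenter μ
    refine ⟨b, fun g => hb.isFixedPt (hact g) (haff g)
      ⟨(hact g).measurable, Measure.ext fun B hB => ?_⟩⟩
    rw [Measure.map_apply (hact g).measurable hB, hinv g B hB]
end

section
/- Let G be a topological group, (I, ≤) a directed partially ordered set, and (X_i)_{i∈I} a family of nonempty compact Hausdorff spaces, each carrying a continuous action of G, together with continuous surjective G-equivariant bonding maps π_{ij} : X_j → X_i for i ≤ j satisfying π_{ii} = id and π_{ik} = π_{ij} ∘ π_{jk} for i ≤ j ≤ k. If each X_i carries an invariant regular Borel probability measure, then the inverse limit X = { x ∈ Π_{i∈I} X_i : π_{ij}(x_j) = x_i for all i ≤ j }, equipped with the subspace topology of the product and the diagonal G-action, carries an invariant regular Borel probability measure. -/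
/-! The measure on the inverse limit `L` comes from a content: a compact `K ⊆ L` gets the limit of
`μ k (π k '' K)` along an ultrafilter finer than `atTop`, where `π k : L → X k` are the projections.
The `μ k` need not be compatible with the bonding maps, which is why an ultralimit is taken.
Additivity on disjoint compacts holds because their projections are eventually disjoint (a
compactness argument in `L × L`), the total mass is `1` because the projections are surjective
(again by compactness), and invariance follows from `π k '' (g • K) = g • π k '' K`. Measures
induced by contents on compact spaces are regular. -/

open MeasureTheory Filter Topology TopologicalSpace Set
open scoped ENNReal Pointwise

section UltralimitContent

variable {ι L : Type*} {Y : ι → Type*} [∀ k, MeasurableSpace (Y k)]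
  (U : Ultrafilter ι) (μ : ∀ k, Measure (Y k)) (π : ∀ k, L → Y k)

noncomputable def ultralimitMass (K : Set L) : ℝ≥0∞ :=
  (U.map fun k => μ k (π k '' K)).lim

lemma tendsto_ultralimitMass (K : Set L) :
    Tendsto (fun k => μ k (π k '' K)) U (𝓝 (ultralimitMass U μ π K)) :=
  (U.map _).le_nhds_lim

variable {U μ π}

lemma ultralimitMass_mono {K₁ K₂ : Set L} (h : K₁ ⊆ K₂) :
    ultralimitMass U μ π K₁ ≤ ultralimitMass U μ π K₂ :=
  le_of_tendsto_of_tendsto' (tendsto_ultralimitMass U μ π K₁) (tendsto_ultralimitMass U μ π K₂)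
    fun _ => measure_mono (image_mono h)

lemma ultralimitMass_union_le (K₁ K₂ : Set L) :
    ultralimitMass U μ π (K₁ ∪ K₂) ≤ ultralimitMass U μ π K₁ + ultralimitMass U μ π K₂ :=
  le_of_tendsto_of_tendsto' (tendsto_ultralimitMass U μ π _)
    ((tendsto_ultralimitMass U μ π K₁).add (tendsto_ultralimitMass U μ π K₂))
    fun k => by rw [image_union]; exact measure_union_le _ _

lemma ultralimitMass_union_of_eventually_disjoint {K₁ K₂ : Set L}
    (h₂ : ∀ᶠ k in U, MeasurableSet (π k '' K₂))
    (hd : ∀ᶠ k in U, Disjoint (π k '' K₁) (π k '' K₂)) :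
    ultralimitMass U μ π (K₁ ∪ K₂) = ultralimitMass U μ π K₁ + ultralimitMass U μ π K₂ := by
  refine tendsto_nhds_unique ((tendsto_ultralimitMass U μ π _).congr' ?_)
    ((tendsto_ultralimitMass U μ π K₁).add (tendsto_ultralimitMass U μ π K₂))
  filter_upwards [h₂, hd] with k hm hk
  rw [image_union, measure_union hk hm]

lemma ultralimitMass_le_one [∀ k, IsProbabilityMeasure (μ k)] (K : Set L) :
    ultralimitMass U μ π K ≤ 1 :=
  le_of_tendsto' (tendsto_ultralimitMass U μ π K) fun _ => prob_le_one

lemma ultralimitMass_univ [∀ k, IsProbabilityMeasure (μ k)] (hsurj : ∀ k, (π k).Surjective) :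
    ultralimitMass U μ π univ = 1 := by
  refine tendsto_nhds_unique (tendsto_ultralimitMass U μ π univ) ?_
  simp only [image_univ, (hsurj _).range_eq, measure_univ, tendsto_const_nhds]

lemma ultralimitMass_ne_top [∀ k, IsProbabilityMeasure (μ k)] (K : Set L) :
    ultralimitMass U μ π K ≠ ∞ :=
  ((ultralimitMass_le_one K).trans_lt ENNReal.one_lt_top).ne

lemma ultralimitMass_smul {G : Type*} [Group G] [MulAction G L] [∀ k, MulAction G (Y k)]
    [∀ k, SMulInvariantMeasure G (Y k) (μ k)] (hequiv : ∀ k (g : G) x, π k (g • x) = g • π k x)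
    (g : G) (K : Set L) : ultralimitMass U μ π (g • K) = ultralimitMass U μ π K := by
  have himage (k : ι) : π k '' (g • K) = g • π k '' K := by
    simp only [← image_smul, image_image, hequiv]
  simp only [ultralimitMass, himage, measure_smul]

variable [TopologicalSpace L] [∀ k, TopologicalSpace (Y k)] [∀ k, T2Space (Y k)]
  [∀ k, BorelSpace (Y k)] [∀ k, IsProbabilityMeasure (μ k)]

variable (U μ) in
noncomputable def ultralimitContent (hπ : ∀ k, Continuous (π k))
    (hsep : ∀ K₁ K₂ : Set L, IsCompact K₁ → IsCompact K₂ → Disjoint K₁ K₂ →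
      ∀ᶠ k in U, Disjoint (π k '' K₁) (π k '' K₂)) : Content L where
  toFun K := (ultralimitMass U μ π K).toNNReal
  mono' _ _ h := ENNReal.toNNReal_mono (ultralimitMass_ne_top _) (ultralimitMass_mono h)
  sup_disjoint' K₁ K₂ hd _ _ := by
    rw [Compacts.coe_sup, ultralimitMass_union_of_eventually_disjoint
      (.of_forall fun k => (K₂.isCompact.image (hπ k)).measurableSet)
      (hsep K₁ K₂ K₁.isCompact K₂.isCompact hd),
      ENNReal.toNNReal_add (ultralimitMass_ne_top _) (ultralimitMass_ne_top _)]
  sup_le' K₁ K₂ := by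
    rw [Compacts.coe_sup, ← ENNReal.toNNReal_add (ultralimitMass_ne_top _)
      (ultralimitMass_ne_top _)]
    exact ENNReal.toNNReal_mono (by simp [ultralimitMass_ne_top]) (ultralimitMass_union_le _ _)

variable {hπ : ∀ k, Continuous (π k)} {hsep : ∀ K₁ K₂ : Set L, IsCompact K₁ → IsCompact K₂ →
  Disjoint K₁ K₂ → ∀ᶠ k in U, Disjoint (π k '' K₁) (π k '' K₂)}

lemma ultralimitContent_apply (K : Compacts L) :
    ultralimitContent U μ hπ hsep K = ultralimitMass U μ π K :=
  ENNReal.coe_toNNReal (ultralimitMass_ne_top _)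

variable [T2Space L] [MeasurableSpace L] [BorelSpace L]

lemma isProbabilityMeasure_ultralimitContent [CompactSpace L] (hsurj : ∀ k, (π k).Surjective) :
    IsProbabilityMeasure (ultralimitContent U μ hπ hsep).measure := by
  constructor
  rw [Content.measure_apply _ MeasurableSet.univ, Content.outerMeasure_of_isOpen _ _ isOpen_univ,
    Content.innerContent_of_isCompact _ isCompact_univ isOpen_univ]
  exact (ultralimitContent_apply ⊤).trans (ultralimitMass_univ hsurj)

lemma smulInvariantMeasure_ultralimitContent {G : Type*} [Group G] [MulAction G L]
    [ContinuousConstSMul G L] [∀ k, MulAction G (Y k)] [∀ k, SMulInvariantMeasure G (Y k) (μ k)]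
    (hequiv : ∀ k (g : G) x, π k (g • x) = g • π k x) :
    SMulInvariantMeasure G L (ultralimitContent U μ hπ hsep).measure := by
  refine ⟨fun g B hB => ?_⟩
  rw [Content.measure_apply _ ((continuous_const_smul g).measurable hB),
    Content.measure_apply _ hB]
  refine (ultralimitContent U μ hπ hsep).outerMeasure_preimage (Homeomorph.smul g) (fun K => ?_) B
  rw [ultralimitContent_apply, ultralimitContent_apply]
  exact ultralimitMass_smul hequiv g K

end UltralimitContent

section InverseLimit

variable {I : Type*} [Preorder I] {X : I → Type*} [∀ i, TopologicalSpace (X i)]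

def inverseLimit (p : ∀ i j, i ≤ j → X j → X i) : Set (∀ i, X i) :=
  {x | ∀ i j (h : i ≤ j), p i j h (x j) = x i}

variable {p : ∀ i j, i ≤ j → X j → X i}

lemma isClosed_inverseLimit [∀ i, T2Space (X i)] (hpcont : ∀ i j h, Continuous (p i j h)) :
    IsClosed (inverseLimit p) := by
  simp only [inverseLimit, ofPred_forall]
  exact isClosed_iInter fun i => isClosed_iInter fun j => isClosed_iInter fun h =>
    isClosed_eq ((hpcont i j h).comp (continuous_apply j)) (continuous_apply i)

lemma compactSpace_inverseLimit [∀ i, CompactSpace (X i)] [∀ i, T2Space (X i)]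
    (hpcont : ∀ i j h, Continuous (p i j h)) : CompactSpace (inverseLimit p) :=
  isCompact_iff_compactSpace.mp (isClosed_inverseLimit hpcont).isCompact

lemma exists_mem_inverseLimit_apply_eq [IsDirected I (· ≤ ·)] [∀ i, CompactSpace (X i)]
    [∀ i, T2Space (X i)] [∀ i, Nonempty (X i)] (hpcont : ∀ i j h, Continuous (p i j h))
    (hpsurj : ∀ i j h, (p i j h).Surjective)
    (hpcomp : ∀ i j k (hij : i ≤ j) (hjk : j ≤ k) (x : X k),
      p i k (hij.trans hjk) x = p i j hij (p j k hjk x))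
    (k : I) (y : X k) : ∃ x ∈ inverseLimit p, x k = y := by
  classical
  let C : I → Set (∀ i, X i) := fun m =>
    {x | x k = y} ∩ ⋂ (i) (j) (h : i ≤ j) (_ : j ≤ m), {x | p i j h (x j) = x i}
  have hC_closed (m : I) : IsClosed (C m) :=
    (isClosed_eq (continuous_apply k) continuous_const).inter <|
      isClosed_iInter fun i => isClosed_iInter fun j => isClosed_iInter fun h =>
        isClosed_iInter fun _ =>
          isClosed_eq ((hpcont i j h).comp (continuous_apply j)) (continuous_apply i)
  have hC_nonempty (m : I) : (C m).Nonempty := by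
    obtain ⟨n, hmn, hkn⟩ := directed_of (· ≤ ·) m k
    obtain ⟨z, rfl⟩ := hpsurj k n hkn y
    refine ⟨fun i => if h : i ≤ n then p i n h z else Classical.arbitrary _, ?_, ?_⟩
    · simp only [mem_ofPred_eq, dif_pos hkn]
    · simp only [mem_iInter, mem_ofPred_eq]
      intro i j hij hjm
      rw [dif_pos (hjm.trans hmn), dif_pos ((hij.trans hjm).trans hmn), ← hpcomp]
  have hC_directed : Directed (· ⊇ ·) C := by
    intro m m'
    obtain ⟨n, hmn, hmn'⟩ := directed_of (· ≤ ·) m m'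
    refine ⟨n, ?_, ?_⟩ <;> refine inter_subset_inter_right _ (iInter_mono fun i =>
      iInter_mono fun j => iInter_mono fun h => iInter_mono' fun hj => ⟨?_, subset_rfl⟩)
    exacts [hj.trans hmn, hj.trans hmn']
  have : Nonempty I := ⟨k⟩
  obtain ⟨x, hx⟩ := IsCompact.nonempty_iInter_of_directed_nonempty_isCompact_isClosed C
    hC_directed hC_nonempty (fun m => (hC_closed m).isCompact) hC_closed
  simp only [C, mem_iInter, mem_inter_iff, mem_ofPred_eq] at hx
  exact ⟨x, fun i j h => (hx j).2 i j h le_rfl, (hx k).1⟩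

lemma eventually_disjoint_image_inverseLimit_apply [IsDirected I (· ≤ ·)] [Nonempty I]
    [∀ i, T2Space (X i)] {K₁ K₂ : Set (inverseLimit p)} (h₁ : IsCompact K₁) (h₂ : IsCompact K₂)
    (hd : Disjoint K₁ K₂) :
    ∀ᶠ k in atTop, Disjoint ((fun x : inverseLimit p => x.1 k) '' K₁)
      ((fun x : inverseLimit p => x.1 k) '' K₂) := by
  let E : I → Set (inverseLimit p × inverseLimit p) := fun i => {q | q.1.1 i = q.2.1 i}
  have hE_closed (i : I) : IsClosed (E i) :=
    isClosed_eq ((continuous_apply i).comp (continuous_subtype_val.comp continuous_fst))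
      ((continuous_apply i).comp (continuous_subtype_val.comp continuous_snd))
  have hE_antitone {i k : I} (hik : i ≤ k) : E k ⊆ E i := fun q (hq : q.1.1 k = q.2.1 k) => by
    show q.1.1 i = q.2.1 i
    rw [← q.1.2 i k hik, ← q.2.2 i k hik, hq]
  have hE_inter : (K₁ ×ˢ K₂) ∩ ⋂ i, E i = ∅ := by
    refine eq_empty_of_forall_notMem fun q ⟨⟨hq₁, hq₂⟩, hq⟩ => ?_
    have : q.1 = q.2 := Subtype.ext (funext (mem_iInter.1 hq))
    exact disjoint_left.1 hd hq₁ (this ▸ hq₂)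
  obtain ⟨i₀, hi₀⟩ := (h₁.prod h₂).elim_directed_family_closed E hE_closed hE_inter
    fun i j => (directed_of (· ≤ ·) i j).imp fun _ h => ⟨hE_antitone h.1, hE_antitone h.2⟩
  refine eventually_atTop.2 ⟨i₀, fun k hk => disjoint_left.2 ?_⟩
  rintro _ ⟨a, ha, rfl⟩ ⟨b, hb, hab⟩
  exact (eq_empty_iff_forall_notMem.1 hi₀) (a, b) ⟨⟨ha, hb⟩, hE_antitone hk hab.symm⟩

abbrev inverseLimit.mulAction {G : Type*} [Monoid G] [∀ i, MulAction G (X i)]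
    (hp : ∀ i j (h : i ≤ j) (g : G) (x : X j), p i j h (g • x) = g • p i j h x) :
    MulAction G (inverseLimit p) where
  smul g x := ⟨g • x.1, fun i j h => by simp only [Pi.smul_apply, hp, x.2 i j h]⟩
  one_smul x := Subtype.ext (one_smul G x.1)
  mul_smul g h x := Subtype.ext (mul_smul g h x.1)

theorem exists_regular_smulInvariant_probabilityMeasure_inverseLimit [IsDirected I (· ≤ ·)]
    [∀ i, CompactSpace (X i)] [∀ i, T2Space (X i)] [∀ i, Nonempty (X i)]
    [∀ i, MeasurableSpace (X i)] [∀ i, BorelSpace (X i)]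
    {G : Type*} [Group G] [∀ i, MulAction G (X i)] [∀ i, ContinuousConstSMul G (X i)]
    [MulAction G (inverseLimit p)] [MeasurableSpace (inverseLimit p)] [BorelSpace (inverseLimit p)]
    (hpcont : ∀ i j h, Continuous (p i j h)) (hpsurj : ∀ i j h, (p i j h).Surjective)
    (hpcomp : ∀ i j k (hij : i ≤ j) (hjk : j ≤ k) (x : X k),
      p i k (hij.trans hjk) x = p i j hij (p j k hjk x))
    (hsmul : ∀ i (g : G) (x : inverseLimit p), (g • x).1 i = g • x.1 i)
    (μ : ∀ i, Measure (X i)) [∀ i, IsProbabilityMeasure (μ i)]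
    [∀ i, SMulInvariantMeasure G (X i) (μ i)] :
    ∃ ν : Measure (inverseLimit p),
      IsProbabilityMeasure ν ∧ ν.Regular ∧ SMulInvariantMeasure G (inverseLimit p) ν := by
  rcases isEmpty_or_nonempty I with hI | hI
  · have : Subsingleton (inverseLimit p) := ⟨fun x y => Subtype.ext (funext isEmptyElim)⟩
    refine ⟨.dirac ⟨isEmptyElim, isEmptyElim⟩, inferInstance, inferInstance, ⟨fun g B _ => ?_⟩⟩
    rw [show (g • ·) ⁻¹' B = B from ext fun x => by rw [mem_preimage, Subsingleton.elim (g • x) x]]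
  have hπ (i : I) : Continuous fun x : inverseLimit p => x.1 i :=
    (continuous_apply i).comp continuous_subtype_val
  have : CompactSpace (inverseLimit p) := compactSpace_inverseLimit hpcont
  have : ContinuousConstSMul G (inverseLimit p) := ⟨fun g => continuous_induced_rng.2 <|
    continuous_pi fun i => by
      simp only [Function.comp_apply, hsmul]
      exact (continuous_const_smul g).comp (hπ i)⟩
  let C := ultralimitContent (.of atTop) μ hπ fun K₁ K₂ h₁ h₂ hd =>
    (eventually_disjoint_image_inverseLimit_apply h₁ h₂ hd).filter_mono (Ultrafilter.of_le _)
  refine ⟨C.measure, isProbabilityMeasure_ultralimitContent fun k y => ?_, C.regular,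
    smulInvariantMeasure_ultralimitContent hsmul⟩
  obtain ⟨x, hx, rfl⟩ := exists_mem_inverseLimit_apply_eq hpcont hpsurj hpcomp k y
  exact ⟨⟨x, hx⟩, rfl⟩

end InverseLimit

/-- If every space in an inverse system of nonempty compact Hausdorff
`G`-spaces (over a directed partially ordered index set, with continuous surjective
equivariant bonding maps) carries an invariant regular Borel probability measure, then so
does the inverse limit, equipped with the subspace topology of the product and the diagonal
`G`-action. -/
theorem stmt_2 (G : Type) [Group G] [TopologicalSpace G]
    (I : Type) [PartialOrder I]
    (hdir : ∀ i j : I, ∃ k, i ≤ k ∧ j ≤ k)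
    (X : I → Type) [∀ i, TopologicalSpace (X i)] [∀ i, CompactSpace (X i)]
    [∀ i, T2Space (X i)] [∀ i, Nonempty (X i)]
    [∀ i, MeasurableSpace (X i)] [∀ i, BorelSpace (X i)]
    (act : ∀ i, G → X i → X i)
    (hone : ∀ i x, act i 1 x = x)
    (hmul : ∀ i g h x, act i (g * h) x = act i g (act i h x))
    (hcont : ∀ i, Continuous fun p : G × X i => act i p.1 p.2)
    (p : ∀ i j, i ≤ j → X j → X i)
    (hpcont : ∀ i j h, Continuous (p i j h))
    (hpsurj : ∀ i j h, Function.Surjective (p i j h))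
    (hpequiv : ∀ i j (h : i ≤ j) (g : G) (x : X j), p i j h (act j g x) = act i g (p i j h x))
    (hpcomp : ∀ i j k (hij : i ≤ j) (hjk : j ≤ k) (x : X k),
      p i k (hij.trans hjk) x = p i j hij (p j k hjk x))
    (hinv : ∀ i, ∃ μ : Measure (X i), IsProbabilityMeasure μ ∧ μ.Regular ∧
      ∀ (g : G) (B : Set (X i)), MeasurableSet B → μ (act i g ⁻¹' B) = μ B) :
    letI L : Type := {x : ∀ i, X i // ∀ i j (h : i ≤ j), p i j h (x j) = x i}
    letI : MeasurableSpace L := borel L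
    ∃ μ : Measure L, IsProbabilityMeasure μ ∧ μ.Regular ∧
      ∀ (g : G) (B : Set L), MeasurableSet B →
        μ ((fun x : L => (⟨fun i => act i g (x.1 i), fun i j hij => by
              show p i j hij (act j g (x.1 j)) = act i g (x.1 i)
              rw [hpequiv i j hij g (x.1 j), x.2 i j hij]⟩ : L)) ⁻¹' B) = μ B := by
  let _ (i : I) : MulAction G (X i) := { smul := act i, one_smul := hone i, mul_smul := hmul i }
  have (i : I) : ContinuousConstSMul G (X i) :=
    ⟨fun g => (hcont i).comp (continuous_const.prodMk continuous_id)⟩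
  have : IsDirected I (· ≤ ·) := ⟨hdir⟩
  choose μ hμ using hinv
  have (i : I) : IsProbabilityMeasure (μ i) := (hμ i).1
  have (i : I) : SMulInvariantMeasure G (X i) (μ i) := ⟨(hμ i).2.2⟩
  let _ : MulAction G (inverseLimit p) := inverseLimit.mulAction hpequiv
  let _ : MeasurableSpace (inverseLimit p) := borel _
  have : BorelSpace (inverseLimit p) := ⟨rfl⟩
  obtain ⟨ν, hν, hreg, hν_inv⟩ :=
    exists_regular_smulInvariant_probabilityMeasure_inverseLimit (G := G) hpcont hpsurj hpcomp
      (fun _ _ _ => rfl) μ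
  exact ⟨ν, hν, hreg, fun g B hB => hν_inv.measure_preimage_smul g hB⟩
end

section
/- A Polish group G is amenable if and only if every continuous action of G on a nonempty compact metrizable space admits an invariant Borel probability measure. -/
open MeasureTheory

def IsAmenableGroup (G : Type) [Group G] [TopologicalSpace G] : Prop :=
  ∀ (X : Type) [TopologicalSpace X] [CompactSpace X] [T2Space X] [Nonempty X]
    [MeasurableSpace X] [BorelSpace X],
    ∀ act : G → X → X,
      (∀ x, act 1 x = x) →
      (∀ g h x, act (g * h) x = act g (act h x)) →
      (Continuous fun p : G × X => act p.1 p.2) →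
      ∃ μ : Measure X, IsProbabilityMeasure μ ∧ μ.Regular ∧
        ∀ (g : G) (B : Set X), MeasurableSet B → μ (act g ⁻¹' B) = μ B

/-!
Only the passage from metrizable to arbitrary compact spaces needs an argument. By the
Riesz–Markov–Kakutani theorem, an invariant regular probability measure on a compact Hausdorff
`G`-space `X` is the same as a `G`-invariant state on `C(X, ℝ)`. States form a weak-* compact set,
so it suffices to find, for finitely many functions `f` and group elements `g`, a state `φ` with
`φ (f ∘ g) = φ f`. Fix a countable dense `D ⊆ G`. The image `Y` of `x ↦ (f (d • x))_{f, d}` in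
`ℝ^(F × D)` is compact metrizable, and by density of `D` it is a `G`-factor of `X` through which
every `f ∈ F` factors. An invariant measure on `Y` gives an invariant state on `C(Y, ℝ)`, and
Hahn–Banach extends it along the isometric embedding `C(Y, ℝ) → C(X, ℝ)`.
-/

open Function TopologicalSpace CompactlySupported

section Factor

variable {G X : Type} [TopologicalSpace G] [TopologicalSpace X]

@[simps]
def ContinuousMap.constSMul [SMul G X] [ContinuousConstSMul G X] (g : G) : C(X, X) :=
  ⟨(g • ·), continuous_const_smul g⟩

theorem ContinuousSMul.of_surjective_of_compactSpace [SMul G X] [ContinuousSMul G X]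
    [CompactSpace X] {Y : Type} [TopologicalSpace Y] [T2Space Y] [SMul G Y] {π : X → Y}
    (hπ : Continuous π)
    (hsurj : Surjective π) (hequiv : ∀ (g : G) x, π (g • x) = g • π x) : ContinuousSMul G Y := by
  have hq : Topology.IsQuotientMap (Prod.map id π : G × X → G × Y) :=
    (isProperMap_id.prodMap hπ.isProperMap).isClosedMap.isQuotientMap
      (continuous_id.prodMap hπ) (surjective_id.prodMap hsurj)
  refine ⟨hq.continuous_iff.mpr ?_⟩
  have : (fun p : G × Y => p.1 • p.2) ∘ Prod.map id π = π ∘ fun p : G × X => p.1 • p.2 :=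
    funext fun p => (hequiv p.1 p.2).symm
  rw [this]
  exact hπ.comp continuous_smul

theorem exists_metrizable_factor [Monoid G] [MulAction G X] [ContinuousSMul G X]
    [SeparableSpace G] [CompactSpace X] (F : Set C(X, ℝ)) (hF : F.Countable) :
    ∃ (Y : Type) (_ : TopologicalSpace Y) (_ : CompactSpace Y) (_ : MetrizableSpace Y)
      (_ : MulAction G Y) (_ : ContinuousSMul G Y) (π : C(X, Y)),
      Surjective π ∧ (∀ (g : G) x, π (g • x) = g • π x) ∧
        ∀ f ∈ F, ∃ h : C(Y, ℝ), h.comp π = f := by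
  obtain ⟨D, hDc, hD⟩ := exists_countable_dense G
  have : Countable F := hF.to_subtype
  have : Countable (insert 1 D : Set G) := (hDc.insert 1).to_subtype
  let Φ : X → (F × (insert 1 D : Set G) → ℝ) := fun x i => i.1.1 (i.2.1 • x)
  have hΦ : Continuous Φ := continuous_pi fun i => by fun_prop
  have hfibre : ∀ (g : G) x x', Φ x = Φ x' → Φ (g • x) = Φ (g • x') := by
    intro g x x' h
    funext i
    have := Continuous.ext_on (hD.mono (Set.subset_insert 1 D))
      (f := fun g : G => i.1.1 (g • x)) (g := fun g : G => i.1.1 (g • x')) (by fun_prop)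
      (by fun_prop) fun d hd => congrFun h (i.1, ⟨d, hd⟩)
    simpa only [Φ, smul_smul] using congrFun this (i.2.1 * g)
  let π : X → Set.range Φ := Set.rangeFactorization Φ
  have hsurj : Surjective π := Set.rangeFactorization_surjective
  let _ : SMul G (Set.range Φ) := ⟨fun g y => π (g • surjInv hsurj y)⟩
  have hequiv : ∀ (g : G) x, π (g • x) = g • π x := fun g x =>
    Subtype.ext (hfibre g _ _ (congrArg Subtype.val (surjInv_eq hsurj (π x)))).symm
  have hπ : Continuous π := hΦ.subtype_mk _
  have : CompactSpace (Set.range Φ) := isCompact_iff_compactSpace.mp (isCompact_range hΦ)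
  let _ : MulAction G (Set.range Φ) := hsurj.mulAction π hequiv
  refine ⟨Set.range Φ, inferInstance, inferInstance, inferInstance, inferInstance,
    .of_surjective_of_compactSpace hπ hsurj hequiv, ⟨π, hπ⟩, hsurj, hequiv, fun f hf => ?_⟩
  refine ⟨⟨fun y => y.1 (⟨f, hf⟩, ⟨1, Set.mem_insert 1 D⟩),
    (continuous_apply _).comp continuous_subtype_val⟩, ?_⟩
  ext x
  simp [π, Φ]

end Factor

section Functionals

variable {X Y : Type} [TopologicalSpace X] [CompactSpace X] [TopologicalSpace Y] [CompactSpace Y]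

theorem ContinuousMap.norm_comp_of_surjective {π : C(X, Y)} (hπ : Surjective π) (h : C(Y, ℝ)) :
    ‖h.comp π‖ = ‖h‖ := by
  refine le_antisymm ((ContinuousMap.norm_le _ (norm_nonneg h)).mpr fun x => h.norm_coe_le_norm _)
    ((ContinuousMap.norm_le _ (norm_nonneg _)).mpr fun y => ?_)
  obtain ⟨x, rfl⟩ := hπ y
  exact (h.comp π).norm_coe_le_norm x

theorem StrongDual.exists_norm_le_comp_eq {π : C(X, Y)} (hπ : Surjective π)
    (ψ : StrongDual ℝ C(Y, ℝ)) :
    ∃ φ : StrongDual ℝ C(X, ℝ), ‖φ‖ ≤ ‖ψ‖ ∧ ∀ h, φ (h.comp π) = ψ h := by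
  let T : C(Y, ℝ) →ₗᵢ[ℝ] C(X, ℝ) :=
    ⟨(ContinuousMap.compRightAlgHom ℝ ℝ π).toLinearMap, ContinuousMap.norm_comp_of_surjective hπ⟩
  let e := T.equivRange
  let ψ₀ : StrongDual ℝ T.range :=
    (ψ.toLinearMap ∘ₗ e.symm.toLinearEquiv.toLinearMap).mkContinuous ‖ψ‖ fun y =>
      (ψ.le_opNorm _).trans_eq (congrArg _ (e.symm.norm_map y))
  obtain ⟨φ, hφ, hnorm⟩ := exists_extension_norm_eq _ ψ₀
  refine ⟨φ, hnorm ▸ LinearMap.mkContinuous_norm_le _ (norm_nonneg ψ) _, fun h => ?_⟩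
  calc φ (h.comp π) = φ (e h) := rfl
    _ = ψ h := by simp [hφ, ψ₀]

noncomputable def ContinuousMap.integralCLM [MeasurableSpace Y] [OpensMeasurableSpace Y]
    (ν : Measure Y) [IsProbabilityMeasure ν] : StrongDual ℝ C(Y, ℝ) :=
  LinearMap.mkContinuous
    { toFun := fun h => ∫ y, h y ∂ν
      map_add' := fun h h' => integral_add
        (h.continuous.integrable_of_hasCompactSupport (.of_compactSpace _))
        (h'.continuous.integrable_of_hasCompactSupport (.of_compactSpace _))
      map_smul' := fun c h => integral_smul c h }
    1 fun h => by
      simpa using norm_integral_le_of_norm_le_const (μ := ν) (.of_forall h.norm_coe_le_norm)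

theorem ContinuousMap.integralCLM_apply [MeasurableSpace Y] [OpensMeasurableSpace Y]
    (ν : Measure Y) [IsProbabilityMeasure ν] (h : C(Y, ℝ)) : integralCLM ν h = ∫ y, h y ∂ν := rfl

theorem ContinuousMap.norm_integralCLM_le [MeasurableSpace Y] [OpensMeasurableSpace Y]
    (ν : Measure Y) [IsProbabilityMeasure ν] : ‖integralCLM ν‖ ≤ 1 :=
  LinearMap.mkContinuous_norm_le _ zero_le_one _

variable (X) in
def stateSpace : Set (WeakDual ℝ C(X, ℝ)) :=
  {φ | ‖WeakDual.toStrongDual φ‖ ≤ 1 ∧ φ 1 = 1}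

theorem isCompact_stateSpace : IsCompact (stateSpace X) := by
  have : stateSpace X = WeakDual.toStrongDual ⁻¹' Metric.closedBall 0 1 ∩ {φ | φ 1 = 1} := by
    ext φ
    exact and_congr_left fun _ => (mem_closedBall_zero_iff (E := StrongDual ℝ C(X, ℝ))).symm
  rw [this]
  exact (WeakDual.isCompact_closedBall 0 1).inter_right
    (isClosed_eq (WeakDual.eval_continuous 1) continuous_const)

theorem StrongDual.nonneg_of_norm_le_one_of_map_one {φ : StrongDual ℝ C(X, ℝ)} (hφ : ‖φ‖ ≤ 1)
    (hφ1 : φ 1 = 1) {f : C(X, ℝ)} (hf : 0 ≤ f) : 0 ≤ φ f := by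
  -- `f - ‖f‖` takes values in `[-‖f‖, 0]`
  have hsub : ‖f - ‖f‖ • 1‖ ≤ ‖f‖ := by
    refine (ContinuousMap.norm_le _ (norm_nonneg f)).mpr fun x => ?_
    have hfx : f x ≤ ‖f‖ := (le_abs_self _).trans (f.norm_coe_le_norm x)
    have hf0 : 0 ≤ f x := hf x
    simp only [ContinuousMap.sub_apply, ContinuousMap.smul_apply, ContinuousMap.one_apply,
      smul_eq_mul, mul_one, Real.norm_eq_abs, abs_le]
    constructor <;> linarith
  have : ‖φ f - ‖f‖‖ ≤ ‖f‖ := by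
    calc ‖φ f - ‖f‖‖ = ‖φ (f - ‖f‖ • 1)‖ := by simp [hφ1]
      _ ≤ ‖φ‖ * ‖f - ‖f‖ • 1‖ := φ.le_opNorm _
      _ ≤ ‖f‖ := (mul_le_of_le_one_left (norm_nonneg _) hφ).trans hsub
  linarith [neg_abs_le (φ f - ‖f‖), Real.norm_eq_abs (φ f - ‖f‖)]

end Functionals

section Riesz

variable {X : Type} [TopologicalSpace X] [T2Space X] [MeasurableSpace X] [BorelSpace X]

theorem MeasureTheory.SMulInvariantMeasure.of_integral_comp_smul_eq {G : Type} [Group G]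
    [MulAction G X] [ContinuousConstSMul G X] [LocallyCompactSpace X] (μ : Measure X) [μ.Regular]
    (h : ∀ (g : G) (f : C_c(X, ℝ)), ∫ x, f (g • x) ∂μ = ∫ x, f x ∂μ) :
    SMulInvariantMeasure G X μ := by
  refine ⟨fun g B hB => ?_⟩
  have : (μ.map (Homeomorph.smul g)).Regular := .map _
  have hmap : μ.map (Homeomorph.smul g) = μ :=
    Measure.ext_of_integral_eq_on_compactlySupported fun f => by
      rw [integral_map (by fun_prop) (by fun_prop)]
      exact h g f
  calc μ ((g • ·) ⁻¹' B) = μ.map (Homeomorph.smul g) B :=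
        (Measure.map_apply (by fun_prop) hB).symm
    _ = μ B := by rw [hmap]

theorem exists_regular_probabilityMeasure_integral_eq_of_mem_stateSpace [CompactSpace X]
    {φ : WeakDual ℝ C(X, ℝ)} (hφ : φ ∈ stateSpace X) :
    ∃ μ : Measure X, IsProbabilityMeasure μ ∧ μ.Regular ∧ ∀ f : C(X, ℝ), ∫ x, f x ∂μ = φ f := by
  let Λ : C_c(X, ℝ) →ₚ[ℝ] ℝ := .mk₀
    { toFun := fun f => φ f.toContinuousMap
      map_add' := fun f g => map_add φ _ _
      map_smul' := fun c f => map_smul φ c _ }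
    fun f hf => StrongDual.nonneg_of_norm_le_one_of_map_one hφ.1 hφ.2 hf
  have hΛ (f : C(X, ℝ)) : ∫ x, f x ∂(RealRMK.rieszMeasure Λ) = φ f :=
    RealRMK.integral_rieszMeasure Λ (.continuousMapEquiv f)
  refine ⟨RealRMK.rieszMeasure Λ, ⟨?_⟩, inferInstance, hΛ⟩
  have := hΛ 1
  simp only [ContinuousMap.one_apply, integral_const, smul_eq_mul, mul_one, hφ.2] at this
  rwa [measureReal_def, ENNReal.toReal_eq_one_iff] at this

end Riesz

def IsMetrizablyAmenable (G : Type) [Group G] [TopologicalSpace G] : Prop :=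
  ∀ (Y : Type) [TopologicalSpace Y] [CompactSpace Y] [MetrizableSpace Y] [Nonempty Y]
    [MeasurableSpace Y] [BorelSpace Y] [MulAction G Y] [ContinuousSMul G Y],
    ∃ ν : Measure Y, IsProbabilityMeasure ν ∧ SMulInvariantMeasure G Y ν

section Amenable

variable {G X : Type} [Group G] [TopologicalSpace G] [SeparableSpace G] [TopologicalSpace X]
  [CompactSpace X] [Nonempty X] [MulAction G X] [ContinuousSMul G X]

theorem exists_mem_stateSpace_forall_mem_finset (H : IsMetrizablyAmenable G)
    (s : Finset (G × C(X, ℝ))) :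
    ∃ φ ∈ stateSpace X, ∀ p ∈ s, φ (p.2.comp (ContinuousMap.constSMul p.1)) = φ p.2 := by
  obtain ⟨Y, _, _, _, _, _, π, hsurj, hequiv, hfactor⟩ :=
    exists_metrizable_factor (G := G) (Prod.snd '' (s : Set (G × C(X, ℝ))))
      (s.countable_toSet.image _)
  have : Nonempty Y := ⟨π (Classical.arbitrary X)⟩
  let _ : MeasurableSpace Y := borel Y
  have : BorelSpace Y := ⟨rfl⟩
  obtain ⟨ν, _, _⟩ := H Y
  obtain ⟨φ, hφ, hφπ⟩ := StrongDual.exists_norm_le_comp_eq hsurj (ContinuousMap.integralCLM ν)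
  refine ⟨StrongDual.toWeakDual φ, ⟨hφ.trans (ContinuousMap.norm_integralCLM_le ν), ?_⟩, ?_⟩
  · simpa [ContinuousMap.integralCLM_apply] using hφπ 1
  · rintro ⟨g, f⟩ hp
    obtain ⟨h, rfl⟩ := hfactor f ⟨(g, f), hp, rfl⟩
    have hcomm : (h.comp π).comp (ContinuousMap.constSMul g) =
        (h.comp (ContinuousMap.constSMul g)).comp π := by
      ext x
      simp [hequiv]
    change φ _ = φ _
    rw [hcomm, hφπ, hφπ, ContinuousMap.integralCLM_apply, ContinuousMap.integralCLM_apply]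
    exact integral_smul_eq_self h

theorem exists_invariant_mem_stateSpace (H : IsMetrizablyAmenable G) :
    ∃ φ ∈ stateSpace X, ∀ (g : G) (f : C(X, ℝ)),
      φ (f.comp (ContinuousMap.constSMul g)) = φ f := by
  obtain ⟨φ, hφ, hφinv⟩ : (stateSpace X ∩
      ⋂ p : G × C(X, ℝ), {φ | φ (p.2.comp (ContinuousMap.constSMul p.1)) = φ p.2}).Nonempty :=
    isCompact_stateSpace.inter_iInter_nonempty _
      (fun p => isClosed_eq (WeakDual.eval_continuous _) (WeakDual.eval_continuous _)) fun s => by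
        obtain ⟨φ, hφ, hφs⟩ := exists_mem_stateSpace_forall_mem_finset H s
        exact ⟨φ, hφ, Set.mem_iInter₂.mpr hφs⟩
  exact ⟨φ, hφ, fun g f => Set.mem_iInter.mp hφinv (g, f)⟩

theorem exists_regular_smulInvariant_probabilityMeasure [T2Space X] [MeasurableSpace X]
    [BorelSpace X] (H : IsMetrizablyAmenable G) :
    ∃ μ : Measure X, IsProbabilityMeasure μ ∧ μ.Regular ∧ SMulInvariantMeasure G X μ := by
  obtain ⟨φ, hφ, hφinv⟩ := exists_invariant_mem_stateSpace (X := X) H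
  obtain ⟨μ, hμ, _, hμφ⟩ := exists_regular_probabilityMeasure_integral_eq_of_mem_stateSpace hφ
  refine ⟨μ, hμ, inferInstance, .of_integral_comp_smul_eq μ fun g f => ?_⟩
  calc ∫ x, f (g • x) ∂μ = φ ((f : C(X, ℝ)).comp (ContinuousMap.constSMul g)) :=
      hμφ ((f : C(X, ℝ)).comp (ContinuousMap.constSMul g))
    _ = φ f := hφinv g f
    _ = ∫ x, f x ∂μ := (hμφ f).symm

end Amenable

theorem stmt_3_general (G : Type) [Group G] [TopologicalSpace G] [PolishSpace G] :
    IsAmenableGroup G ↔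
    ∀ (X : Type) [TopologicalSpace X] [CompactSpace X]
      [TopologicalSpace.MetrizableSpace X] [Nonempty X] [MeasurableSpace X] [BorelSpace X],
      ∀ act : G → X → X,
        (∀ x, act 1 x = x) →
        (∀ g h x, act (g * h) x = act g (act h x)) →
        (Continuous fun p : G × X => act p.1 p.2) →
        ∃ μ : Measure X, IsProbabilityMeasure μ ∧
          ∀ (g : G) (B : Set X), MeasurableSet B → μ (act g ⁻¹' B) = μ B := by
  refine ⟨fun hA X _ _ _ _ _ _ act h1 hm hc => ?_, fun H X _ _ _ _ _ _ act h1 hm hc => ?_⟩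
  · obtain ⟨μ, hμ, -, hinv⟩ := hA X act h1 hm hc
    exact ⟨μ, hμ, hinv⟩
  · have hG : IsMetrizablyAmenable G := fun Y _ _ _ _ _ _ _ _ => by
      obtain ⟨ν, hν, hinv⟩ := H Y (· • ·) (one_smul G) mul_smul continuous_smul
      exact ⟨ν, hν, ⟨hinv⟩⟩
    let _ : MulAction G X := { smul := act, one_smul := h1, mul_smul := hm }
    have : ContinuousSMul G X := ⟨hc⟩
    obtain ⟨μ, hμ, hreg, hinv⟩ := exists_regular_smulInvariant_probabilityMeasure (X := X) hG
    exact ⟨μ, hμ, hreg, fun g B hB => hinv.measure_preimage_smul g hB⟩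

/-- A Polish group `G` is amenable iff every continuous action of `G` on a
nonempty compact metrizable space admits an invariant Borel probability measure. -/
theorem stmt_3 (G : Type) [Group G] [TopologicalSpace G] [IsTopologicalGroup G] [PolishSpace G] :
    IsAmenableGroup G ↔
    ∀ (X : Type) [TopologicalSpace X] [CompactSpace X]
      [TopologicalSpace.MetrizableSpace X] [Nonempty X] [MeasurableSpace X] [BorelSpace X],
      ∀ act : G → X → X,
        (∀ x, act 1 x = x) →
        (∀ g h x, act (g * h) x = act g (act h x)) →
        (Continuous fun p : G × X => act p.1 p.2) →
        ∃ μ : Measure X, IsProbabilityMeasure μ ∧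
          ∀ (g : G) (B : Set X), MeasurableSet B → μ (act g ⁻¹' B) = μ B :=
  stmt_3_general G
end

section
/- A Polish group G is non-archimedean if and only if there exists an injective group homomorphism from G into the group S_∞ of all bijections of ℕ, equipped with the topology of pointwise convergence (ℕ being discrete), which is a homeomorphism onto its image. -/
/-!
If `G` carries the topology induced from `S_∞`, the pointwise stabilisers of finite subsets of `ℕ`
are open subgroups forming a neighbourhood basis of `1`. Conversely, if `G` is non-archimedean and
second countable, pick a countable basis `(H n)` of open subgroups and let `G` act by left
translation on the countable set `Σ n, G ⧸ H n`. Since the stabiliser of the coset `H n` is `H n`,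
this action induces the topology of `G`, and it is injective because `G` is T₀.
-/

open Topology Filter TopologicalSpace

theorem hasBasis_nhds_pi_discrete {ι α : Type*} [TopologicalSpace α] [DiscreteTopology α]
    (f : ι → α) : (𝓝 f).HasBasis Set.Finite fun s => s.pi fun i => {f i} := by
  rw [nhds_pi, nhds_discrete]
  exact (hasBasis_pi fun i => hasBasis_pure (f i)).to_hasBasis
    (fun I hI => ⟨I.1, hI.1, subset_rfl⟩)
    fun s hs => ⟨(s, fun _ => ()), ⟨hs, fun _ _ => trivial⟩, subset_rfl⟩

section OpenSubgroupBasis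
variable {G : Type*} [Group G] [TopologicalSpace G]

theorem nhds_one_hasBasis_openSubgroup_iff :
    (𝓝 (1 : G)).HasBasis (fun H : Subgroup G => IsOpen (H : Set G)) (↑) ↔
      ∀ U ∈ 𝓝 (1 : G), ∃ H : Subgroup G, IsOpen (H : Set G) ∧ (H : Set G) ⊆ U := by
  refine ⟨fun h U hU => h.mem_iff.mp hU, fun h => ⟨fun U => ⟨h U, ?_⟩⟩⟩
  rintro ⟨H, hH, hHU⟩
  exact mem_of_superset (hH.mem_nhds H.one_mem) hHU

theorem hasBasis_nhds_one_comap_fixingSubgroup {α : Type*} [TopologicalSpace α]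
    [DiscreteTopology α] (φ : G →* Equiv.Perm α) (hφ : IsInducing fun g => ⇑(φ g)) :
    (𝓝 (1 : G)).HasBasis Set.Finite
      fun s : Set α => ((fixingSubgroup (Equiv.Perm α) s).comap φ : Set G) := by
  rw [hφ.nhds_eq_comap]
  refine ((hasBasis_nhds_pi_discrete _).comap _).congr (fun _ => Iff.rfl) fun s _ => ?_
  ext g
  simp [mem_fixingSubgroup_iff, Set.mem_pi]

theorem exists_openSubgroup_subset_of_isInducing [SeparatelyContinuousMul G] {α : Type*}
    [TopologicalSpace α] [DiscreteTopology α] (φ : G →* Equiv.Perm α)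
    (hφ : IsInducing fun g => ⇑(φ g)) :
    ∀ U ∈ 𝓝 (1 : G), ∃ H : Subgroup G, IsOpen (H : Set G) ∧ (H : Set G) ⊆ U := by
  have hb := hasBasis_nhds_one_comap_fixingSubgroup φ hφ
  intro U hU
  obtain ⟨s, hs, hsU⟩ := hb.mem_iff.mp hU
  exact ⟨_, Subgroup.isOpen_of_mem_nhds _ (hb.mem_of_mem hs), hsU⟩

theorem isInducing_smul_sigma_quotient [IsTopologicalGroup G] {ι : Type*} {H : ι → Subgroup G}
    (hH : (𝓝 (1 : G)).HasBasis (fun _ => True) fun i => (H i : Set G)) :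
    IsInducing fun (g : G) (x : Σ i, G ⧸ H i) => g • x := by
  have _ i : DiscreteTopology (G ⧸ H i) :=
    QuotientGroup.discreteTopology (Subgroup.isOpen_of_mem_nhds _ (hH.mem_of_mem trivial))
  have hcont : Continuous fun (g : G) (x : Σ i, G ⧸ H i) => g • x :=
    continuous_pi fun _ => continuous_sigmaMk.comp (continuous_id.smul continuous_const)
  refine isInducing_iff_nhds.mpr fun g => le_antisymm (hcont.tendsto g).le_comap ?_
  -- The fibre through `g` of `h ↦ h • ⟨i, H i⟩` is the basic neighbourhood `g • H i`.
  rw [← nhds_translation_inv_mul g]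
  refine (hH.comap _).ge_iff.mpr fun i _ => ?_
  let x : Σ i, G ⧸ H i := ⟨i, (1 : G)⟩
  refine mem_comap.mpr ⟨(· x) ⁻¹' {g • x},
    ((isOpen_discrete _).preimage (continuous_apply x)).mem_nhds rfl, fun h hh => ?_⟩
  have hgh : ((g : G) : G ⧸ H i) = h := by simpa [x] using hh.symm
  exact QuotientGroup.eq.mp hgh

theorem exists_monoidHom_perm_nat_isInducing [IsTopologicalGroup G] [SecondCountableTopology G]
    (hG : ∀ U ∈ 𝓝 (1 : G), ∃ H : Subgroup G, IsOpen (H : Set G) ∧ (H : Set G) ⊆ U) :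
    ∃ φ : G →* Equiv.Perm ℕ, IsInducing fun g => ⇑(φ g) := by
  obtain ⟨H, hHopen, hH⟩ := (nhds_one_hasBasis_openSubgroup_iff.mpr hG).exists_antitone_subbasis
  have _ n : DiscreteTopology (G ⧸ H n) := QuotientGroup.discreteTopology (hHopen n)
  have _ n : Countable (G ⧸ H n) := separableSpace_iff_countable.mp inferInstance
  have : Infinite (Σ n, G ⧸ H n) :=
    Infinite.of_injective (fun n => ⟨n, (1 : G)⟩) fun _ _ h => congrArg Sigma.fst h
  obtain ⟨d⟩ := nonempty_denumerable (Σ n, G ⧸ H n)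
  let e := Denumerable.eqv (Σ n, G ⧸ H n)
  refine ⟨e.permCongrHom.toMonoidHom.comp (MulAction.toPermHom G _), ?_⟩
  convert (Homeomorph.piCongr (Y₂ := fun _ => ℕ) e fun _ => e.toHomeomorphOfDiscrete).isInducing
    |>.comp (isInducing_smul_sigma_quotient hH.toHasBasis) using 1
  ext g j
  obtain ⟨x, rfl⟩ := e.surjective j
  simp [Homeomorph.piCongr_apply, Equiv.toHomeomorphOfDiscrete]

end OpenSubgroupBasis

/-- A Polish group `G` is non-archimedean (it has a neighbourhood base at the
identity consisting of open subgroups) iff there exists an injective group homomorphism from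
`G` into the group `S_∞` of all bijections of `ℕ`, with the topology of pointwise convergence,
which is a homeomorphism onto its image (i.e. a topological embedding). -/
theorem stmt_7 (G : Type) [Group G] [TopologicalSpace G] [IsTopologicalGroup G] [PolishSpace G] :
    letI : TopologicalSpace (Equiv.Perm ℕ) :=
      TopologicalSpace.induced (fun σ : Equiv.Perm ℕ => (σ : ℕ → ℕ)) Pi.topologicalSpace
    ((∀ U ∈ nhds (1 : G), ∃ H : Subgroup G, IsOpen (H : Set G) ∧ (H : Set G) ⊆ U) ↔
      ∃ φ : G →* Equiv.Perm ℕ, Function.Injective ⇑φ ∧ Topology.IsEmbedding ⇑φ) := by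
  let _ : TopologicalSpace (Equiv.Perm ℕ) :=
    TopologicalSpace.induced (fun σ : Equiv.Perm ℕ => (σ : ℕ → ℕ)) Pi.topologicalSpace
  have hcoe : IsInducing fun σ : Equiv.Perm ℕ => (σ : ℕ → ℕ) := ⟨rfl⟩
  constructor
  · intro hG
    obtain ⟨φ, hφ⟩ := exists_monoidHom_perm_nat_isInducing hG
    have hemb : IsEmbedding φ := (hcoe.of_comp_iff.mp hφ).isEmbedding
    exact ⟨φ, hemb.injective, hemb⟩
  · rintro ⟨φ, -, hφ⟩
    exact exists_openSubgroup_subset_of_isInducing φ (hcoe.comp hφ.isInducing)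
end

section
/- A Polish group G is non-archimedean if and only if there exists an injective group homomorphism from G into the group Homeo({0,1}^ℕ) of all self-homeomorphisms of the Cantor space, equipped with the compact-open topology, which is a homeomorphism onto its image. -/
/-- The Cantor space `{0,1}^ℕ` with the product topology. -/
abbrev CantorSpace : Type := ℕ → Bool

/-- The group of self-homeomorphisms of the Cantor space, under composition. -/
instance : Group (CantorSpace ≃ₜ CantorSpace) where
  mul f g := g.trans f
  one := Homeomorph.refl _
  inv := Homeomorph.symm
  mul_assoc f g h := Homeomorph.ext fun _ => rfl
  one_mul f := Homeomorph.ext fun _ => rfl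
  mul_one f := Homeomorph.ext fun _ => rfl
  inv_mul_cancel f := Homeomorph.ext fun x => f.symm_apply_apply x

/-!
The topology of `Homeo(2^ℕ)` has a basis at the identity of open subgroups: the homeomorphisms
fixing every cylinder of length `k`. They are open, and by a Lebesgue number argument for
cylinders every compact-open neighbourhood of the identity contains one of them. Open subgroups
pull back to open subgroups along an embedding.

Conversely, a non-archimedean Polish group `G` has a countable basis of open subgroups `H j`,
each of countable index since `G` is separable. So `G` acts on the countable set
`Σ j, G ⧸ H j` with open stabilizers, and the stabilizers of the cosets `H j` form a basis at
`1`.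
Enumerating this set by `ℕ` and letting `G` permute the coordinates of `2^ℕ` accordingly gives a
continuous homomorphism, which is inducing thanks to the stabilizer basis, hence an embedding as
`G` is T₀.
-/

open Topology TopologicalSpace Filter Set PiNat

section Cylinders

variable {E : ℕ → Type*} [∀ n, TopologicalSpace (E n)] [∀ n, DiscreteTopology (E n)]

theorem PiNat.exists_cylinder_subset_of_mem_nhds {x : ∀ n, E n} {U : Set (∀ n, E n)}
    (hU : U ∈ 𝓝 x) : ∃ k, cylinder x k ⊆ U := by
  obtain ⟨_, ⟨y, k, rfl⟩, hxy, hyU⟩ :=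
    (isTopologicalBasis_cylinders E).mem_nhds_iff.1 hU
  exact ⟨k, (mem_cylinder_iff_eq.1 hxy).symm ▸ hyU⟩

theorem PiNat.exists_forall_cylinder_subset {K U : Set (∀ n, E n)} (hK : IsCompact K)
    (hU : IsOpen U) (hKU : K ⊆ U) : ∃ k, ∀ x ∈ K, cylinder x k ⊆ U := by
  let W : ℕ → Set (∀ n, E n) := fun k => {x | cylinder x k ⊆ U}
  have hW_open (k : ℕ) : IsOpen (W k) := isOpen_iff_mem_nhds.2 fun x hx =>
    mem_of_superset ((isOpen_cylinder E x k).mem_nhds (self_mem_cylinder x k))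
      fun y hy => by simpa [W, mem_cylinder_iff_eq.1 hy] using hx
  have hW_mono : Monotone W := fun k l hkl x hx => (cylinder_anti x hkl).trans hx
  have hKW : K ⊆ ⋃ k, W k := fun x hx =>
    mem_iUnion.2 (exists_cylinder_subset_of_mem_nhds (hU.mem_nhds (hKU hx)))
  exact hK.elim_directed_cover W hW_open hKW hW_mono.directed_le

variable {X : Type*} [TopologicalSpace X]

theorem ContinuousMap.iInf_principal_cylinder_le_nhds (f : C(X, ∀ n, E n)) :
    ⨅ k, 𝓟 {g : C(X, ∀ n, E n) | ∀ x, g x ∈ cylinder (f x) k} ≤ 𝓝 f := by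
  simp only [nhds_compactOpen, le_iInf_iff, le_principal_iff]
  intro K hK U hU hKU
  obtain ⟨k, hk⟩ := exists_forall_cylinder_subset (hK.image f.continuous) hU hKU.image_subset
  exact mem_iInf_of_mem k fun g hg x hx => hk (f x) (mem_image_of_mem f hx) (hg x)

theorem ContinuousMap.setOf_forall_mem_cylinder_mem_nhds [CompactSpace X] [∀ n, Finite (E n)]
    (f : C(X, ∀ n, E n)) (k : ℕ) :
    {g : C(X, ∀ n, E n) | ∀ x, g x ∈ cylinder (f x) k} ∈ 𝓝 f := by
  have hmaps (i : ℕ) (b : E i) :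
      ∀ᶠ g : C(X, ∀ n, E n) in 𝓝 f, MapsTo g (f ⁻¹' {y | y i = b}) {y | y i = b} :=
    eventually_mapsTo
      ((isClosed_eq (continuous_apply i) continuous_const).preimage f.continuous).isCompact
      ((isOpen_discrete {b}).preimage (continuous_apply i)) fun x hx => hx
  filter_upwards [(finite_lt_nat k).eventually_all.2 fun i _ => eventually_all.2 (hmaps i)]
    with g hg x i hi using hg i hi (f x i) rfl

theorem ContinuousMap.hasBasis_nhds_cylinder [CompactSpace X] [∀ n, Finite (E n)]
    (f : C(X, ∀ n, E n)) :
    (𝓝 f).HasBasis (fun _ => True)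
      fun k => {g : C(X, ∀ n, E n) | ∀ x, g x ∈ cylinder (f x) k} := by
  have hanti : Antitone fun k => {g : C(X, ∀ n, E n) | ∀ x, g x ∈ cylinder (f x) k} :=
    fun k l hkl g hg x => cylinder_anti _ hkl (hg x)
  convert hasBasis_iInf_principal hanti.directed_ge
  exact le_antisymm
    (le_iInf fun k => le_principal_iff.2 (setOf_forall_mem_cylinder_mem_nhds f k))
    (iInf_principal_cylinder_le_nhds f)

theorem ContinuousMap.isOpen_setOf_forall_mem_cylinder [CompactSpace X] [∀ n, Finite (E n)]
    (f : C(X, ∀ n, E n)) (k : ℕ) :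
    IsOpen {g : C(X, ∀ n, E n) | ∀ x, g x ∈ cylinder (f x) k} := by
  refine isOpen_iff_mem_nhds.2 fun g hg => ?_
  convert setOf_forall_mem_cylinder_mem_nhds g k using 4 with h x
  rw [mem_cylinder_iff_eq.1 (hg x)]

end Cylinders

theorem exists_isOpen_subgroup_subset_of_isInducing {G K : Type*} [Group G]
    [TopologicalSpace G] [Group K] [TopologicalSpace K] (φ : G →* K) (hφ : IsInducing φ)
    (hK : ∀ V ∈ 𝓝 (1 : K), ∃ H : Subgroup K, IsOpen (H : Set K) ∧ (H : Set K) ⊆ V) :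
    ∀ U ∈ 𝓝 (1 : G), ∃ H : Subgroup G, IsOpen (H : Set G) ∧ (H : Set G) ⊆ U := by
  intro U hU
  rw [hφ.nhds_eq_comap, map_one] at hU
  obtain ⟨V, hV, hVU⟩ := hU
  obtain ⟨H, hH, hHV⟩ := hK V hV
  exact ⟨H.comap φ, hH.preimage hφ.continuous, fun g hg => hVU (hHV hg)⟩

abbrev homeoTopology : TopologicalSpace (CantorSpace ≃ₜ CantorSpace) :=
  TopologicalSpace.induced
    (fun f : CantorSpace ≃ₜ CantorSpace =>
      (⟨⇑f, f.continuous⟩ : C(CantorSpace, CantorSpace)))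
    ContinuousMap.compactOpen

section HomeoGroup

attribute [local instance] homeoTopology

def cylinderStabilizer (k : ℕ) : Subgroup (CantorSpace ≃ₜ CantorSpace) where
  carrier := {f | ∀ x, f x ∈ cylinder x k}
  one_mem' x := self_mem_cylinder x k
  mul_mem' {f g} hf hg x := by
    simpa only [Homeomorph.mul_apply, mem_cylinder_iff_eq.1 (hg x)] using hf (g x)
  inv_mem' {f} hf x := by
    simpa [mem_cylinder_comm (f.symm x)] using hf (f.symm x)

theorem isOpen_cylinderStabilizer (k : ℕ) :
    IsOpen (cylinderStabilizer k : Set (CantorSpace ≃ₜ CantorSpace)) :=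
  (ContinuousMap.isOpen_setOf_forall_mem_cylinder (.id CantorSpace) k).preimage
    continuous_induced_dom

theorem exists_cylinderStabilizer_subset {U : Set (CantorSpace ≃ₜ CantorSpace)}
    (hU : U ∈ 𝓝 1) :
    ∃ k, (cylinderStabilizer k : Set (CantorSpace ≃ₜ CantorSpace)) ⊆ U := by
  obtain ⟨N, hN, hNU⟩ := (mem_nhds_induced _ _ _).1 hU
  obtain ⟨k, -, hk⟩ := (ContinuousMap.hasBasis_nhds_cylinder _).mem_iff.1 hN
  exact ⟨k, fun f hf => hNU (hk hf)⟩

theorem continuous_homeo_apply (x : CantorSpace) :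
    Continuous fun f : CantorSpace ≃ₜ CantorSpace => f x :=
  (continuous_eval_const (F := C(CantorSpace, CantorSpace)) x).comp
    (continuous_induced_dom : Continuous fun f : CantorSpace ≃ₜ CantorSpace =>
      (⟨⇑f, f.continuous⟩ : C(CantorSpace, CantorSpace)))

theorem homeo_exists_isOpen_subgroup_subset :
    ∀ U ∈ 𝓝 (1 : CantorSpace ≃ₜ CantorSpace),
      ∃ H : Subgroup (CantorSpace ≃ₜ CantorSpace),
        IsOpen (H : Set (CantorSpace ≃ₜ CantorSpace)) ∧
          (H : Set (CantorSpace ≃ₜ CantorSpace)) ⊆ U :=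
  fun _ hU =>
    let ⟨k, hk⟩ := exists_cylinderStabilizer_subset hU
    ⟨_, isOpen_cylinderStabilizer k, hk⟩

end HomeoGroup

section CoordPerm

variable (G : Type*) [Group G] [MulAction G ℕ]

def coordPermHom : G →* (CantorSpace ≃ₜ CantorSpace) where
  toFun g :=
    { toFun x n := x (g⁻¹ • n)
      invFun x n := x (g • n)
      left_inv x := by simp
      right_inv x := by simp
      continuous_toFun := by fun_prop
      continuous_invFun := by fun_prop }
  map_one' := by ext; simp
  map_mul' g h := by ext; simp [mul_smul]

variable {G}

theorem coordPermHom_apply (g : G) (x : CantorSpace) (n : ℕ) :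
    coordPermHom G g x n = x (g⁻¹ • n) := rfl

variable [TopologicalSpace G]

attribute [local instance] homeoTopology

theorem continuous_coordPermHom [ContinuousInv G] [ContinuousSMul G ℕ] :
    Continuous (coordPermHom G) := by
  have hjoint : Continuous fun p : G × CantorSpace => coordPermHom G p.1 p.2 := by
    have heval : Continuous fun q : ℕ × CantorSpace => q.2 q.1 :=
      continuous_prod_of_discrete_left.2 fun n => continuous_apply n
    exact continuous_pi fun n =>
      heval.comp (f := fun p : G × CantorSpace => (p.1⁻¹ • n, p.2)) (by fun_prop)
  exact continuous_induced_rng.2 (ContinuousMap.curry ⟨_, hjoint⟩).continuous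

theorem isInducing_coordPermHom [IsTopologicalGroup G] [ContinuousSMul G ℕ]
    (hG : ∀ U ∈ 𝓝 (1 : G), ∃ n : ℕ, (MulAction.stabilizer G n : Set G) ⊆ U) :
    IsInducing (coordPermHom G) := by
  refine isInducing_iff_nhds.2 fun g =>
    le_antisymm (continuous_coordPermHom.tendsto g).le_comap fun U hU => ?_
  obtain ⟨n, hn⟩ := hG _ ((continuous_const_mul g).tendsto' 1 g (mul_one g) hU)
  -- `coordPermHom G h` sends the indicator of `{n}` to the indicator of `{h • n}`
  let δ : CantorSpace := fun m => decide (m = n)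
  have hopen : IsOpen {f : CantorSpace ≃ₜ CantorSpace | f δ (g • n) = true} :=
    (isOpen_discrete {true}).preimage
      (f := fun f : CantorSpace ≃ₜ CantorSpace => f δ (g • n))
      ((continuous_apply (g • n)).comp (continuous_homeo_apply δ))
  refine ⟨_, hopen.mem_nhds (by simp [δ, coordPermHom_apply]), fun h hh => ?_⟩
  have hhn : h⁻¹ • g • n = n := by simpa [δ, coordPermHom_apply] using hh
  have hstab : g⁻¹ * h ∈ MulAction.stabilizer G n := by
    rw [MulAction.mem_stabilizer_iff, mul_smul, inv_smul_eq_iff]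
    exact (inv_smul_eq_iff.1 hhn).symm
  simpa using hn hstab

end CoordPerm

section NonarchimedeanPolish

variable {G : Type*} [Group G]

theorem MulAction.stabilizer_sigma_mk {ι : Type*} {α : ι → Type*} [∀ i, MulAction G (α i)]
    (i : ι) (a : α i) : stabilizer G (⟨i, a⟩ : Σ i, α i) = stabilizer G a := by
  ext g
  simp [Sigma.smul_mk]

theorem MulAction.stabilizer_equiv {α β : Type*} [MulAction G β] (e : α ≃ β) (a : α) :
    let := e.mulAction G
    stabilizer G a = stabilizer G (e a) := by
  ext g
  simp [Equiv.smul_def, e.symm_apply_eq]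

variable [TopologicalSpace G]

theorem exists_seq_isOpen_subgroup_subset [FirstCountableTopology G]
    (hG : ∀ U ∈ 𝓝 (1 : G), ∃ H : Subgroup G, IsOpen (H : Set G) ∧ (H : Set G) ⊆ U) :
    ∃ H : ℕ → Subgroup G, (∀ j, IsOpen (H j : Set G)) ∧
      ∀ U ∈ 𝓝 (1 : G), ∃ j, (H j : Set G) ⊆ U := by
  obtain ⟨B, hB⟩ := (𝓝 (1 : G)).exists_antitone_basis
  choose H hH_open hHB using fun j => hG (B j) (hB.mem j)
  refine ⟨H, hH_open, fun U hU => ?_⟩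
  obtain ⟨j, -, hj⟩ := hB.toHasBasis.mem_iff.1 hU
  exact ⟨j, (hHB j).trans hj⟩

theorem countable_quotient_of_isOpen [SeparatelyContinuousMul G] [SeparableSpace G]
    {H : Subgroup G} (hH : IsOpen (H : Set G)) : Countable (G ⧸ H) :=
  haveI := QuotientGroup.discreteTopology hH
  separableSpace_iff_countable.1
    (QuotientGroup.mk_surjective.denseRange.separableSpace QuotientGroup.continuous_mk)

theorem exists_continuousSMul_nat_stabilizer_subset [IsTopologicalGroup G]
    [FirstCountableTopology G] [SeparableSpace G]
    (hG : ∀ U ∈ 𝓝 (1 : G), ∃ H : Subgroup G, IsOpen (H : Set G) ∧ (H : Set G) ⊆ U) :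
    ∃ _ : MulAction G ℕ, ContinuousSMul G ℕ ∧
      ∀ U ∈ 𝓝 (1 : G), ∃ n : ℕ, (MulAction.stabilizer G n : Set G) ⊆ U := by
  obtain ⟨H, hH_open, hH⟩ := exists_seq_isOpen_subgroup_subset hG
  have (j : ℕ) : Countable (G ⧸ H j) := countable_quotient_of_isOpen (hH_open j)
  obtain ⟨e⟩ : Nonempty (ℕ ≃ Σ j, G ⧸ H j) := inferInstance
  let := e.mulAction G
  refine ⟨_, continuousSMul_iff_stabilizer_isOpen.2 fun n => ?_, fun U hU => ?_⟩
  · obtain ⟨j, q, hq⟩ : ∃ j q, e n = ⟨j, q⟩ := ⟨_, _, rfl⟩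
    have := QuotientGroup.discreteTopology (hH_open j)
    rw [MulAction.stabilizer_equiv, hq, MulAction.stabilizer_sigma_mk]
    exact stabilizer_isOpen G q
  · obtain ⟨j, hj⟩ := hH U hU
    refine ⟨e.symm ⟨j, (1 : G)⟩, ?_⟩
    rwa [MulAction.stabilizer_equiv, e.apply_symm_apply, MulAction.stabilizer_sigma_mk,
      MulAction.stabilizer_quotient]

end NonarchimedeanPolish

/-- A Polish group `G` is non-archimedean (it has a neighbourhood base at the
identity consisting of open subgroups) iff there exists an injective group homomorphism from
`G` into the group `Homeo({0,1}^ℕ)` of self-homeomorphisms of the Cantor space, equipped with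
the compact-open topology, which is a homeomorphism onto its image (i.e. a topological
embedding). -/
theorem stmt_8 (G : Type) [Group G] [TopologicalSpace G] [IsTopologicalGroup G] [PolishSpace G] :
    letI : TopologicalSpace (CantorSpace ≃ₜ CantorSpace) :=
      TopologicalSpace.induced
        (fun f : CantorSpace ≃ₜ CantorSpace => (⟨⇑f, f.continuous⟩ : C(CantorSpace, CantorSpace)))
        ContinuousMap.compactOpen
    ((∀ U ∈ nhds (1 : G), ∃ H : Subgroup G, IsOpen (H : Set G) ∧ (H : Set G) ⊆ U) ↔
      ∃ φ : G →* (CantorSpace ≃ₜ CantorSpace),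
        Function.Injective ⇑φ ∧ Topology.IsEmbedding ⇑φ) := by
  let := homeoTopology
  constructor
  · intro hG
    obtain ⟨_, _, hstab⟩ := exists_continuousSMul_nat_stabilizer_subset hG
    have hφ := isInducing_coordPermHom hstab
    exact ⟨coordPermHom G, hφ.injective, hφ.isEmbedding⟩
  · rintro ⟨φ, -, hφ⟩
    exact exists_isOpen_subgroup_subset_of_isInducing φ hφ.isInducing
      homeo_exists_isOpen_subgroup_subset
end

section
/- The group S_∞ of all bijections of ℕ, equipped with the topology of pointwise convergence, is amenable: every continuous action of S_∞ on a nonempty compact Hausdorff space admits an invariant regular Borel probability measure. -/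
/-!
The subgroups `H n` of permutations fixing every `k ≥ n` are finite, increase with `n`, and their
union is dense in `S_∞`. Averaging `f ↦ f (h • x₀)` over `h ∈ H n` gives states of `C(X, ℝ)`
invariant under `H n`; a weak-* cluster point of them (Banach–Alaoglu) is a state invariant under
`⋃ n, H n`, hence under all of `S_∞`, because `g ↦ f ∘ (g • ·)` is continuous into `C(X, ℝ)`.
The Riesz–Markov–Kakutani theorem turns this state into a regular probability measure, which is
invariant because a regular measure is determined by its integrals of continuous functions.
-/

open MeasureTheory Filter Topology Set Equiv CompactlySupported

namespace Equiv.Perm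

lemma lt_iff_lt_of_mem_fixingSubgroup_Ici {n : ℕ} {g : Perm ℕ}
    (hg : g ∈ fixingSubgroup (Perm ℕ) (Ici n)) (k : ℕ) : g k < n ↔ k < n := by
  have hfix : ∀ k, n ≤ k → g k = k := fun k hk => (mem_fixingSubgroup_iff _).1 hg k hk
  refine ⟨fun hgk => not_le.1 fun hk => ?_, fun hk => not_le.1 fun hgk => ?_⟩
  · exact (hfix k hk ▸ hgk).not_ge hk
  · exact hk.not_ge (g.injective (hfix _ hgk) ▸ hgk)

instance finite_fixingSubgroup_Ici (n : ℕ) : Finite (fixingSubgroup (Perm ℕ) (Ici n)) :=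
  Set.Finite.subset (Set.finite_range (ofSubtype : Perm {k // k < n} →* Perm ℕ)) fun g hg =>
    ⟨g.subtypePerm (lt_iff_lt_of_mem_fixingSubgroup_Ici hg),
      ofSubtype_subtypePerm _ fun k hk =>
        not_le.1 fun hnk => hk ((mem_fixingSubgroup_iff _).1 hg k hnk)⟩

lemma monotone_fixingSubgroup_Ici : Monotone fun n : ℕ => fixingSubgroup (Perm ℕ) (Ici n) :=
  (fixingSubgroup_antitone _ _).comp antitone_Ici

lemma exists_mem_fixingSubgroup_Ici_eqOn_Iio (g : Perm ℕ) (m : ℕ) :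
    ∃ n : ℕ, ∃ σ ∈ fixingSubgroup (Perm ℕ) (Ici n), EqOn σ g (Iio m) := by
  induction m with
  | zero => exact ⟨0, 1, one_mem _, fun i hi => absurd hi (Nat.not_lt_zero i)⟩
  | succ m ih =>
    obtain ⟨n, σ, hσ, hσg⟩ := ih
    -- `σ * swap m t` sends `m` to `σ t = g m` and agrees with `σ` below `m`
    set t := σ⁻¹ (g m)
    have hσt : σ t = g m := σ.apply_symm_apply _
    refine ⟨max n (max m t + 1), σ * swap m t, (mem_fixingSubgroup_iff _).2 fun k hk => ?_,
      fun i hi => ?_⟩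
    · simp only [mem_Ici, max_le_iff] at hk
      rw [Perm.smul_def, mul_apply, swap_apply_of_ne_of_ne (by omega) (by omega)]
      exact (mem_fixingSubgroup_iff _).1 hσ k hk.1
    · rcases (Nat.lt_succ_iff_lt_or_eq.1 hi) with hi | rfl
      · have hit : i ≠ t := by
          intro hit
          rw [← hit, hσg hi] at hσt
          exact hi.ne (g.injective hσt)
        rw [mul_apply, swap_apply_of_ne_of_ne hi.ne hit, hσg hi]
      · rw [mul_apply, swap_apply_left, hσt]

abbrev pointwiseTopology : TopologicalSpace (Perm ℕ) :=
  .induced (fun σ : Perm ℕ => (σ : ℕ → ℕ)) Pi.topologicalSpace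

end Equiv.Perm

attribute [local instance] Equiv.Perm.pointwiseTopology

lemma Equiv.Perm.dense_iUnion_fixingSubgroup_Ici :
    Dense (⋃ n : ℕ, (fixingSubgroup (Perm ℕ) (Ici n) : Set (Perm ℕ))) := by
  intro g
  choose n σ hσ hσg using exists_mem_fixingSubgroup_Ici_eqOn_Iio g
  refine mem_closure_of_tendsto (f := σ) (b := atTop) ?_
    (Eventually.of_forall fun m => mem_iUnion.2 ⟨n m, hσ m⟩)
  rw [nhds_induced, tendsto_comap_iff, tendsto_pi_nhds]
  exact fun i => tendsto_const_nhds.congr'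
    ((eventually_gt_atTop i).mono fun m hm => (hσg m (mem_Iio.2 hm)).symm)

lemma StrongDual.exists_tendsto_apply_of_norm_le {𝕜 E ι : Type*} [NontriviallyNormedField 𝕜]
    [ProperSpace 𝕜] [SeminormedAddCommGroup E] [NormedSpace 𝕜 E] (𝒰 : Ultrafilter ι)
    (Λ : ι → StrongDual 𝕜 E) {r : ℝ} (hΛ : ∀ i, ‖Λ i‖ ≤ r) :
    ∃ L : StrongDual 𝕜 E, ∀ x, Tendsto (fun i => Λ i x) 𝒰 (𝓝 (L x)) := by
  obtain ⟨L, -, hL⟩ := (WeakDual.isCompact_closedBall (0 : StrongDual 𝕜 E) r).ultrafilter_le_nhds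
    (𝒰.map fun i => StrongDual.toWeakDual (Λ i))
    (le_principal_iff.2 (mem_map.2 (univ_mem' fun i => by simpa using hΛ i)))
  exact ⟨WeakDual.toStrongDual L, fun x => ((WeakDual.eval_continuous x).tendsto L).comp hL⟩

section InvariantMean

variable {G X : Type*} [Group G] [TopologicalSpace X] [MulAction G X]

noncomputable def orbitAverage (H : Subgroup G) [Fintype H] (x : X) : StrongDual ℝ C(X, ℝ) :=
  (Fintype.card H : ℝ)⁻¹ • ∑ h : H, ContinuousMap.evalCLM ℝ ((h : G) • x)

variable (H : Subgroup G) [Fintype H] (x : X)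

lemma orbitAverage_apply (f : C(X, ℝ)) :
    orbitAverage H x f = (Fintype.card H : ℝ)⁻¹ * ∑ h : H, f ((h : G) • x) := by
  simp [orbitAverage]

lemma orbitAverage_one : orbitAverage H x 1 = 1 := by
  simp [orbitAverage_apply]

variable {H x} in
lemma orbitAverage_nonneg {f : C(X, ℝ)} (hf : 0 ≤ f) : 0 ≤ orbitAverage H x f := by
  rw [orbitAverage_apply]
  exact mul_nonneg (by positivity) (Finset.sum_nonneg fun h _ => hf _)

lemma norm_orbitAverage_le [CompactSpace X] : ‖orbitAverage H x‖ ≤ 1 := by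
  refine ContinuousLinearMap.opNorm_le_bound _ zero_le_one fun f => ?_
  rw [orbitAverage_apply, norm_mul, one_mul, norm_inv, Real.norm_natCast,
    inv_mul_le_iff₀ (by positivity)]
  calc ‖∑ h : H, f ((h : G) • x)‖ ≤ ∑ h : H, ‖f‖ :=
        norm_sum_le_of_le _ fun h _ => f.norm_coe_le_norm _
    _ = Fintype.card H * ‖f‖ := by simp

lemma orbitAverage_comp_smul [ContinuousConstSMul G X] {g : G} (hg : g ∈ H) (f : C(X, ℝ)) :
    orbitAverage H x (f.comp ((Homeomorph.smul g : X ≃ₜ X) : C(X, X))) = orbitAverage H x f := by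
  simp only [orbitAverage_apply, ContinuousMap.comp_apply]
  congr 1
  exact Fintype.sum_equiv (Equiv.mulLeft ⟨g, hg⟩) _ _ fun h => by simp [mul_smul]

variable (G) in
structure IsInvariantMean [ContinuousConstSMul G X] (L : StrongDual ℝ C(X, ℝ)) : Prop where
  map_one : L 1 = 1
  nonneg : ∀ f, 0 ≤ f → 0 ≤ L f
  map_comp_smul : ∀ (g : G) (f : C(X, ℝ)),
    L (f.comp ((Homeomorph.smul g : X ≃ₜ X) : C(X, X))) = L f

lemma continuous_comp_smul [TopologicalSpace G] [ContinuousSMul G X] (f : C(X, ℝ)) :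
    Continuous fun g : G => f.comp ((Homeomorph.smul g : X ≃ₜ X) : C(X, X)) :=
  (ContinuousMap.curry ⟨fun p : G × X => f (p.1 • p.2), by fun_prop⟩).continuous

theorem exists_isInvariantMean_of_dense_iUnion [TopologicalSpace G] [ContinuousSMul G X]
    [CompactSpace X] [Nonempty X] {ι : Type*} [Preorder ι] [IsDirectedOrder ι] [Nonempty ι]
    (H : ι → Subgroup G) [∀ i, Finite (H i)] (hmono : Monotone H)
    (hdense : Dense (⋃ i, (H i : Set G))) :
    ∃ L : StrongDual ℝ C(X, ℝ), IsInvariantMean G L := by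
  have := fun i => Fintype.ofFinite (H i)
  obtain ⟨x⟩ := ‹Nonempty X›
  let 𝒰 := Ultrafilter.of (atTop : Filter ι)
  obtain ⟨L, hL⟩ := StrongDual.exists_tendsto_apply_of_norm_le 𝒰 (fun i => orbitAverage (H i) x)
    fun i => norm_orbitAverage_le (H i) x
  have hinv : ∀ f, EqOn (fun g : G => L (f.comp ((Homeomorph.smul g : X ≃ₜ X) : C(X, X))))
      (fun _ => L f) (⋃ i, (H i : Set G)) := by
    intro f g hg
    obtain ⟨j, hj⟩ := mem_iUnion.1 hg
    refine tendsto_nhds_unique (hL _) ((hL f).congr' ?_)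
    filter_upwards [Ultrafilter.of_le atTop (eventually_ge_atTop j)] with i hi
    exact (orbitAverage_comp_smul (H i) x (hmono hi hj) f).symm
  refine ⟨L, tendsto_nhds_unique (hL 1) (by simp [orbitAverage_one]),
    fun f hf => ge_of_tendsto (hL f) (univ_mem' fun i => orbitAverage_nonneg hf),
    fun g f => congrFun (Continuous.ext_on hdense (L.continuous.comp (continuous_comp_smul f))
      continuous_const (hinv f)) g⟩

end InvariantMean

lemma RealRMK.map_rieszMeasure_of_comp_eq {X : Type*} [TopologicalSpace X] [T2Space X]
    [LocallyCompactSpace X] [MeasurableSpace X] [BorelSpace X] (Λ : C_c(X, ℝ) →ₚ[ℝ] ℝ)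
    (e : X ≃ₜ X) (h : ∀ f : C_c(X, ℝ), Λ (f.comp e.toCocompactMap) = Λ f) :
    (rieszMeasure Λ).map e = rieszMeasure Λ := by
  have := Measure.Regular.map (μ := rieszMeasure Λ) e
  refine Measure.ext_of_integral_eq_on_compactlySupported fun f => ?_
  rw [← e.toMeasurableEquiv_coe, integral_map_equiv, integral_rieszMeasure, ← h,
    ← integral_rieszMeasure]
  rfl

theorem IsInvariantMean.exists_regular_smulInvariant_probabilityMeasure {G X : Type*} [Group G]
    [TopologicalSpace X] [CompactSpace X] [T2Space X] [MeasurableSpace X] [BorelSpace X]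
    [MulAction G X] [ContinuousConstSMul G X] {L : StrongDual ℝ C(X, ℝ)}
    (hL : IsInvariantMean G L) :
    ∃ μ : Measure X, IsProbabilityMeasure μ ∧ μ.Regular ∧ SMulInvariantMeasure G X μ := by
  let Λ : C_c(X, ℝ) →ₚ[ℝ] ℝ := .mk₀
    { toFun := fun f => L f
      map_add' := fun f g => map_add L (f : C(X, ℝ)) g
      map_smul' := fun c f => map_smul L c (f : C(X, ℝ)) }
    fun f hf => hL.nonneg f hf
  refine ⟨RealRMK.rieszMeasure Λ, ⟨?_⟩, inferInstance, ⟨fun g B hB => ?_⟩⟩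
  · rw [← ENNReal.toReal_eq_one_iff, ← measureReal_def]
    simpa using (RealRMK.integral_rieszMeasure Λ
      (CompactlySupportedContinuousMap.continuousMapEquiv 1)).trans hL.map_one
  · have hΛ_inv := RealRMK.map_rieszMeasure_of_comp_eq Λ (Homeomorph.smul g)
      fun f => hL.map_comp_smul g f
    rw [← Measure.map_apply (measurable_const_smul g) hB]
    exact congrFun (congrArg _ hΛ_inv) B

/-- The group `S_∞` of all bijections of `ℕ`, with the topology of pointwise
convergence, is amenable: every continuous action of `S_∞` on a nonempty compact Hausdorff
space admits an invariant regular Borel probability measure. -/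
theorem stmt_9 :
    letI : TopologicalSpace (Equiv.Perm ℕ) :=
      TopologicalSpace.induced (fun σ : Equiv.Perm ℕ => (σ : ℕ → ℕ)) Pi.topologicalSpace
    ∀ (X : Type) [TopologicalSpace X] [CompactSpace X] [T2Space X] [Nonempty X]
      [MeasurableSpace X] [BorelSpace X],
      ∀ act : Equiv.Perm ℕ → X → X,
        (∀ x, act 1 x = x) →
        (∀ g h x, act (g * h) x = act g (act h x)) →
        (Continuous fun p : Equiv.Perm ℕ × X => act p.1 p.2) →
        ∃ μ : Measure X, IsProbabilityMeasure μ ∧ μ.Regular ∧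
          ∀ (g : Equiv.Perm ℕ) (B : Set X), MeasurableSet B → μ (act g ⁻¹' B) = μ B := by
  intro X _ _ _ _ _ _ act act_one act_mul act_continuous
  let : MulAction (Perm ℕ) X := { smul := act, one_smul := act_one, mul_smul := act_mul }
  have : ContinuousSMul (Perm ℕ) X := ⟨act_continuous⟩
  obtain ⟨L, hL⟩ := exists_isInvariantMean_of_dense_iUnion (X := X) _
    Perm.monotone_fixingSubgroup_Ici Perm.dense_iUnion_fixingSubgroup_Ici
  obtain ⟨μ, hμ, hμ_regular, hμ_invariant⟩ :=
    hL.exists_regular_smulInvariant_probabilityMeasure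
  exact ⟨μ, hμ, hμ_regular, fun g B _ => measure_preimage_smul μ g B⟩
end

section
/- Let m be an uncountable cardinal and let (X, d) be a metric space with the following extension property: for every subset Y ⊆ X of cardinality < m and every Katětov function f : Y → ℝ there exists z ∈ X with d(z, y) = f(y) for all y ∈ Y. Let G be a subgroup of the isometry group Iso(X), equipped with the topology of pointwise convergence, whose density is < m. Then the sets V[x; ε] ∩ G = { g ∈ G : d(x, g·x) < ε } for x ∈ X and ε > 0 form a neighbourhood base at the identity of G; that is, for every finite family x₁, …, xₙ ∈ X and every ε > 0 there exist y ∈ X and γ > 0 such that every g ∈ G with d(y, g·y) < γ satisfies d(xᵢ, g·xᵢ) < ε for all i = 1, …, n. -/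
set_option maxHeartbeats 1000000 in
/-- Let `m` be an uncountable cardinal and `(X, d)` a metric space such that
every Katětov function on a subset of cardinality `< m` is realized as a distance function from
a point of `X`.  If `G` is a subgroup of `Iso(X)` (topology of pointwise convergence) of
density `< m`, then the sets `V[x; ε] ∩ G = {g ∈ G : d(x, g·x) < ε}` form a neighbourhood base
at the identity of `G`: for all `x₁, …, xₙ ∈ X` and `ε > 0` there are `y ∈ X` and `γ > 0`
such that every `g ∈ G` with `d(y, g·y) < γ` satisfies `d(xᵢ, g·xᵢ) < ε` for all `i`. -/
theorem stmt_17 (m : Cardinal) (hm : Cardinal.aleph0 < m)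
    (X : Type) [MetricSpace X]
    (hext : ∀ Y : Set X, Cardinal.mk Y < m →
      ∀ f : X → ℝ,
        (∀ y ∈ Y, ∀ y' ∈ Y, |f y - f y'| ≤ dist y y' ∧ dist y y' ≤ f y + f y') →
        ∃ z : X, ∀ y ∈ Y, dist z y = f y)
    [tI : TopologicalSpace (X ≃ᵢ X)]
    (htI : tI = TopologicalSpace.induced (fun g : X ≃ᵢ X => (g : X → X)) Pi.topologicalSpace)
    (G : Subgroup (X ≃ᵢ X))
    (hdens : ∃ D : Set G, Dense D ∧ Cardinal.mk D < m) :
    ∀ (n : ℕ) (x : Fin n → X) (ε : ℝ), 0 < ε →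
      ∃ (y : X) (γ : ℝ), 0 < γ ∧
        ∀ g : G, dist y ((g : X ≃ᵢ X) y) < γ →
          ∀ i : Fin n, dist (x i) ((g : X ≃ᵢ X) (x i)) < ε := by
  classical
  obtain ⟨D, hD, hDm⟩ := hdens
  have hXne : Nonempty X := by
    obtain ⟨z, -⟩ := hext ∅
      (by rw [Cardinal.mk_emptyCollection]; exact Cardinal.aleph0_pos.trans hm)
      (fun _ => 0) (by simp)
    exact ⟨z⟩
  have hc1 : Continuous (fun u : X ≃ᵢ X => (u : X → X)) :=
    continuous_iff_le_induced.mpr (le_of_eq htI)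
  have hc2 : Continuous (Subtype.val : G → X ≃ᵢ X) := continuous_subtype_val
  have hcontev : ∀ p : X, Continuous fun u : G => (u : X ≃ᵢ X) p :=
    fun p => (continuous_apply p).comp (hc1.comp hc2)
  intro n x ε hε
  obtain _ | n := n
  · exact ⟨Classical.choice hXne, 1, one_pos, fun g _ i => i.elim0⟩
  -- the scale s₀
  set s₀ : ℝ := ε / 3 with hs₀def
  have hs₀ : 0 < s₀ := by rw [hs₀def]; linarith
  have hs₀3 : s₀ * 3 = ε := by rw [hs₀def]; ring
  clear_value s₀
  -- maximal separated subfamily S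
  set sep : Finset (Fin (n + 1)) → Prop :=
    fun T => ∀ i ∈ T, ∀ j ∈ T, i ≠ j → s₀ ≤ dist (x i) (x j) with hsepdef
  obtain ⟨S, hSmem, hSmax⟩ :=
    Finset.exists_max_image ((Finset.univ : Finset (Finset (Fin (n + 1)))).filter sep)
      Finset.card ⟨∅, by simp [hsepdef]⟩
  have hSsep : sep S := (Finset.mem_filter.1 hSmem).2
  have hcover : ∀ i, ∃ j ∈ S, dist (x i) (x j) < s₀ := by
    intro i
    by_contra hcon
    push_neg at hcon
    have hiS : i ∉ S := by
      intro hi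
      have := hcon i hi
      rw [dist_self] at this
      linarith
    have hins : sep (insert i S) := by
      intro a ha b hb hab
      rcases Finset.mem_insert.1 ha with ha' | ha' <;>
        rcases Finset.mem_insert.1 hb with hb' | hb'
      · exact absurd (ha'.trans hb'.symm) hab
      · subst ha'; exact hcon b hb'
      · subst hb'; rw [dist_comm]; exact hcon a ha'
      · exact hSsep a ha' b hb' hab
    have hle := hSmax (insert i S)
      (Finset.mem_filter.2 ⟨Finset.mem_univ _, hins⟩)
    rw [Finset.card_insert_of_notMem hiS] at hle
    omega
  have hSne : S.Nonempty := by
    obtain ⟨j, hj, -⟩ := hcover ⟨0, Nat.succ_pos n⟩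
    exact ⟨j, hj⟩
  -- the gap β
  set β : ℝ := s₀ / (2 * ((n : ℝ) + 2)) with hβdef
  have hβpos : 0 < β := by
    rw [hβdef]; exact div_pos hs₀ (by positivity)
  have hβn : β * ((n : ℝ) + 1) ≤ s₀ / 2 := by
    rw [hβdef, div_mul_eq_mul_div, div_le_div_iff₀ (by positivity) (by norm_num)]
    nlinarith [hs₀.le]
  clear_value β
  have hβle : β ≤ s₀ / 2 := by
    have e : β * ((n : ℝ) + 1) = β * (n : ℝ) + β := by ring
    have h0 : 0 ≤ β * (n : ℝ) := mul_nonneg hβpos.le (Nat.cast_nonneg n)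
    linarith
  have hβi : ∀ i : Fin (n + 1), β * ((i : ℕ) : ℝ) ≤ s₀ / 2 := by
    intro i
    have hv : ((i : ℕ) : ℝ) ≤ (n : ℝ) + 1 := by
      have : ((i : ℕ) : ℝ) ≤ (n : ℝ) := by exact_mod_cast Nat.lt_succ_iff.mp i.isLt
      linarith
    calc β * ((i : ℕ) : ℝ) ≤ β * ((n : ℝ) + 1) :=
          mul_le_mul_of_nonneg_left hv hβpos.le
      _ ≤ s₀ / 2 := hβn
  have hβj0 : ∀ j : Fin (n + 1), (0:ℝ) ≤ β * ((j : ℕ) : ℝ) :=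
    fun j => mul_nonneg hβpos.le (Nat.cast_nonneg _)
  -- the bound M
  obtain ⟨M, hM, hM0⟩ : ∃ M : ℝ, (∀ i j, dist (x i) (x j) ≤ M) ∧ 0 ≤ M := by
    have hMne : (Finset.univ : Finset (Fin (n + 1) × Fin (n + 1))).Nonempty :=
      Finset.univ_nonempty
    refine ⟨Finset.univ.sup' hMne (fun p : Fin (n + 1) × Fin (n + 1) =>
      dist (x p.1) (x p.2)), fun i j => ?_, ?_⟩
    · exact Finset.le_sup' (fun p : Fin (n + 1) × Fin (n + 1) => dist (x p.1) (x p.2))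
        (Finset.mem_univ (i, j))
    · exact le_trans dist_nonneg (Finset.le_sup'
        (fun p : Fin (n + 1) × Fin (n + 1) => dist (x p.1) (x p.2))
        (Finset.mem_univ ((0 : Fin (n+1)), (0 : Fin (n+1)))))
  -- the levels r
  set r : Fin (n + 1) → ℝ := fun j => M + β * ((j : ℕ) : ℝ) with hrdef
  have hrval : ∀ j, r j = M + β * ((j : ℕ) : ℝ) := fun j => by rw [hrdef]
  clear_value r
  have hr0 : ∀ j, (0 : ℝ) ≤ r j := by
    intro j; have := hβj0 j; rw [hrval j]; linarith
  have hrM : ∀ j, M ≤ r j := by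
    intro j; have := hβj0 j; rw [hrval j]; linarith
  -- the Katětov function F
  set F : X → ℝ := fun a => S.inf' hSne (fun j => r j + dist a (x j)) with hFdef
  have hF_le : ∀ (a : X) (j : Fin (n + 1)), j ∈ S → F a ≤ r j + dist a (x j) :=
    fun a j hj => Finset.inf'_le _ hj
  have hF_ex : ∀ a : X, ∃ j ∈ S, F a = r j + dist a (x j) :=
    fun a => Finset.exists_mem_eq_inf' hSne _
  have hFxi : ∀ i : Fin (n + 1), i ∈ S → F (x i) = r i := by
    intro i hiS
    apply le_antisymm
    · have := hF_le (x i) i hiS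
      rwa [dist_self, add_zero] at this
    · rw [hFdef]
      apply Finset.le_inf'
      intro j hj
      by_cases hji : j = i
      · subst hji; simp [dist_self]
      · have hd : s₀ ≤ dist (x i) (x j) := hSsep i hiS j hj (fun e => hji e.symm)
        have h1 := hβi i
        have h2 := hβj0 j
        rw [hrval i, hrval j]
        linarith
  clear_value F
  have hK1 : ∀ a b : X, F a - F b ≤ dist a b := by
    intro a b
    obtain ⟨k, hk, hFb⟩ := hF_ex b
    have h1 := hF_le a k hk
    have h2 := dist_triangle a b (x k)
    linarith
  have hK2 : ∀ a b : X, dist a b ≤ F a + F b := by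
    intro a b
    obtain ⟨j, hj, hFa⟩ := hF_ex a
    obtain ⟨k, hk, hFb⟩ := hF_ex b
    have h1 := dist_triangle4 a (x j) (x k) b
    have h2 := hM j k
    have h3 : dist (x k) b = dist b (x k) := dist_comm _ _
    have h4 := hrM j
    have h5 := hr0 k
    linarith
  -- the realization set Y
  set D₀ : Set G := insert 1 D with hD₀def
  set Y : Set X := Set.range (fun p : (↥D₀ × Fin (n + 1)) =>
    ((p.1 : G) : X ≃ᵢ X) (x p.2)) with hYdef
  have hYm : Cardinal.mk Y < m := by
    refine lt_of_le_of_lt Cardinal.mk_range_le ?_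
    rw [Cardinal.mk_prod, Cardinal.lift_id, Cardinal.lift_id, Cardinal.mk_fin]
    refine Cardinal.mul_lt_of_lt hm.le ?_ ?_
    · exact lt_of_le_of_lt Cardinal.mk_insert_le
        (Cardinal.add_lt_of_lt hm.le hDm (Cardinal.one_lt_aleph0.trans hm))
    · exact (Cardinal.nat_lt_aleph0 _).trans hm
  have hmem : ∀ (h : G), h ∈ D₀ → ∀ i, ((h : X ≃ᵢ X) (x i)) ∈ Y :=
    fun h hh i => ⟨(⟨h, hh⟩, i), rfl⟩
  have hxY : ∀ i, x i ∈ Y := by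
    intro i
    have := hmem 1 (Set.mem_insert _ _) i
    simpa using this
  obtain ⟨y, hy⟩ := hext Y hYm F (by
    intro a ha b hb
    refine ⟨?_, hK2 a b⟩
    rw [abs_sub_le_iff]
    exact ⟨hK1 a b, by rw [dist_comm]; exact hK1 b a⟩)
  refine ⟨y, β / 4, by linarith, ?_⟩
  intro g hg i
  -- approximate g by h ∈ D
  have hη : (0 : ℝ) < β / 8 := by linarith
  set U : Set G := {u : G | dist ((u : X ≃ᵢ X) y) ((g : X ≃ᵢ X) y) < β / 8 ∧
    ∀ i, dist ((u : X ≃ᵢ X) (x i)) ((g : X ≃ᵢ X) (x i)) < β / 8} with hUdef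
  have hUopen : IsOpen U := by
    have hU2 : U = (fun u : G => (u : X ≃ᵢ X) y) ⁻¹' Metric.ball ((g : X ≃ᵢ X) y) (β / 8) ∩
        ⋂ i : Fin (n + 1), (fun u : G => (u : X ≃ᵢ X) (x i)) ⁻¹'
          Metric.ball ((g : X ≃ᵢ X) (x i)) (β / 8) := by
      ext u
      simp [hUdef, Metric.mem_ball]
    rw [hU2]
    exact ((Metric.isOpen_ball).preimage (hcontev y)).inter
      (isOpen_iInter_of_finite fun i => (Metric.isOpen_ball).preimage (hcontev (x i)))
  have hgU : g ∈ U := ⟨by simpa [dist_self] using hη, fun i => by simpa [dist_self] using hη⟩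
  obtain ⟨h, hhD, hhU⟩ := hD.exists_mem_open hUopen ⟨g, hgU⟩
  have hhy : dist ((h : X ≃ᵢ X) y) ((g : X ≃ᵢ X) y) < β / 8 := hhU.1
  have hhx : ∀ i, dist ((h : X ≃ᵢ X) (x i)) ((g : X ≃ᵢ X) (x i)) < β / 8 := hhU.2
  have hyh : dist y ((h : X ≃ᵢ X) y) < 3 * β / 8 := by
    have e1 := dist_triangle y ((g : X ≃ᵢ X) y) ((h : X ≃ᵢ X) y)
    have e2 : dist ((g : X ≃ᵢ X) y) ((h : X ≃ᵢ X) y)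
        = dist ((h : X ≃ᵢ X) y) ((g : X ≃ᵢ X) y) := dist_comm _ _
    linarith
  -- main claim by strong induction on the index
  have main : ∀ k : ℕ, ∀ i : Fin (n + 1), (i : ℕ) = k → i ∈ S →
      dist ((h : X ≃ᵢ X) (x i)) (x i) < β / 2 := by
    intro k
    induction k using Nat.strong_induction_on with
    | _ k IH =>
      intro i hik hiS
      have h1 : dist y ((h : X ≃ᵢ X) (x i)) = F ((h : X ≃ᵢ X) (x i)) :=
        hy _ (hmem h (Set.mem_insert_of_mem _ hhD) i)
      have h2 : dist y (x i) = F (x i) := hy _ (hxY i)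
      have hiso : dist ((h : X ≃ᵢ X) y) ((h : X ≃ᵢ X) (x i)) = dist y (x i) :=
        IsometryEquiv.dist_eq _ _ _
      have hstep : F ((h : X ≃ᵢ X) (x i)) < r i + β / 2 := by
        have tri := dist_triangle y ((h : X ≃ᵢ X) y) ((h : X ≃ᵢ X) (x i))
        have hfx := hFxi i hiS
        linarith
      obtain ⟨j, hjS, hFeq⟩ := hF_ex ((h : X ≃ᵢ X) (x i))
      have hj1 : r j + dist ((h : X ≃ᵢ X) (x i)) (x j) < r i + β / 2 := by
        rw [← hFeq]; exact hstep
      have hdn : (0:ℝ) ≤ dist ((h : X ≃ᵢ X) (x i)) (x j) := dist_nonneg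
      have hji : (j : ℕ) ≤ (i : ℕ) := by
        by_contra hc
        push_neg at hc
        have hcast : ((i : ℕ) : ℝ) + 1 ≤ ((j : ℕ) : ℝ) := by exact_mod_cast hc
        have hmul : β * (((i : ℕ) : ℝ) + 1) ≤ β * ((j : ℕ) : ℝ) :=
          mul_le_mul_of_nonneg_left hcast hβpos.le
        have hexp : β * (((i : ℕ) : ℝ) + 1) = β * ((i : ℕ) : ℝ) + β := by ring
        have hrij : r i + β ≤ r j := by
          rw [hrval i, hrval j]; linarith
        linarith
      by_cases hcase : j = i
      · subst hcase
        linarith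
      · have hjlt : (j : ℕ) < k := by
          rw [← hik]
          exact lt_of_le_of_ne hji (fun e => hcase (Fin.ext e))
        have hIH : dist ((h : X ≃ᵢ X) (x j)) (x j) < β / 2 := IH (j : ℕ) hjlt j rfl hjS
        have hsep' : s₀ ≤ dist (x i) (x j) := hSsep i hiS j hjS (fun e => hcase e.symm)
        have hisod : dist ((h : X ≃ᵢ X) (x i)) ((h : X ≃ᵢ X) (x j)) = dist (x i) (x j) :=
          IsometryEquiv.dist_eq _ _ _
        have tri2 := dist_triangle ((h : X ≃ᵢ X) (x i)) (x j) ((h : X ≃ᵢ X) (x j))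
        have hcm : dist (x j) ((h : X ≃ᵢ X) (x j)) = dist ((h : X ≃ᵢ X) (x j)) (x j) :=
          dist_comm _ _
        have hri := hβi i
        have hrj := hβj0 j
        exfalso
        have hrr : r i - r j ≤ s₀ / 2 := by
          rw [hrval i, hrval j]; linarith
        linarith
  -- conclude for an arbitrary index i
  obtain ⟨j, hjS, hij⟩ := hcover i
  have hj : dist ((h : X ≃ᵢ X) (x j)) (x j) < β / 2 := main (j : ℕ) j rfl hjS
  have hgj : dist (x j) ((g : X ≃ᵢ X) (x j)) < β / 2 + β / 8 := by
    have t := dist_triangle (x j) ((h : X ≃ᵢ X) (x j)) ((g : X ≃ᵢ X) (x j))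
    have c := dist_comm ((h : X ≃ᵢ X) (x j)) (x j)
    linarith [hhx j]
  have hgiso : dist ((g : X ≃ᵢ X) (x j)) ((g : X ≃ᵢ X) (x i)) = dist (x j) (x i) :=
    IsometryEquiv.dist_eq _ _ _
  have t2 := dist_triangle4 (x i) (x j) ((g : X ≃ᵢ X) (x j)) ((g : X ≃ᵢ X) (x i))
  have c2 : dist (x j) (x i) = dist (x i) (x j) := dist_comm _ _
  linarith
end
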